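/- arXiv:2410.18651 — 5 statements merged into one kernel-verified Lean document; each statement's English description precedes it below -/
import Mathlib

section
/- For a, b > 0 with a₁ = a₂ + 2b₂, the composition R_{a₁,b₁} ∘ R_{a₂,b₂} equals (1/2)·B(b₁,b₂)·R_{a₂, b₁+b₂}, where B is the Beta function. That is, for every continuous f : (-1,1) → ℝ and t ∈ (-1,1), ∫₀¹∫₀¹ f(xst) x^{a₂-1}(1-x²)^{b₂-1} s^{a₁-1}(1-s²)^{b₁-1} dx ds = (1/2)B(b₁,b₂) ∫₀¹ f(st) s^{a₂-1}(1-s²)^{b₁+b₂-1} ds. -/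
/-- The transform `R_{a,b}`, defined by `(R_{a,b} f)(t) = ∫₀¹ f(st) s^{a-1} (1-s²)^{b-1} ds`. -/
noncomputable def Rab (a b : ℝ) (f : ℝ → ℝ) (t : ℝ) : ℝ :=
  ∫ s in (0 : ℝ)..1, f (s * t) * s ^ (a - 1) * (1 - s ^ 2) ^ (b - 1)

open MeasureTheory Set intervalIntegral

lemma realBeta {p q : ℝ} (hp : 0 < p) (hq : 0 < q) :
    ∫ x in (0:ℝ)..1, x ^ (p-1) * (1-x) ^ (q-1)
      = Real.Gamma p * Real.Gamma q / Real.Gamma (p+q) := by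
  have hc : Complex.Gamma p * Complex.Gamma q
      = Complex.Gamma (p+q) * Complex.betaIntegral p q := by
    have := Complex.Gamma_mul_Gamma_eq_betaIntegral
      (s := (p:ℂ)) (t := (q:ℂ)) (by simpa using hp) (by simpa using hq)
    simpa using this
  have hbeta : Complex.betaIntegral p q
      = ((∫ x in (0:ℝ)..1, x ^ (p-1) * (1-x) ^ (q-1) : ℝ) : ℂ) := by
    rw [Complex.betaIntegral, ← intervalIntegral.integral_ofReal]
    apply intervalIntegral.integral_congr
    intro x hx
    rw [Set.uIcc_of_le (by norm_num : (0:ℝ) ≤ 1)] at hx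
    have hx0 : 0 ≤ x := hx.1
    have hx1 : 0 ≤ 1 - x := by linarith [hx.2]
    show (x:ℂ) ^ ((p:ℂ)-1) * (1-(x:ℂ)) ^ ((q:ℂ)-1) = ((x ^ (p-1) * (1-x) ^ (q-1) : ℝ) : ℂ)
    rw [Complex.ofReal_mul, Complex.ofReal_cpow hx0, Complex.ofReal_cpow hx1]
    push_cast
    ring
  rw [hbeta] at hc
  have hne : Real.Gamma (p+q) ≠ 0 := (Real.Gamma_pos_of_pos (by linarith)).ne'
  have hr : Real.Gamma p * Real.Gamma q
      = Real.Gamma (p+q) * ∫ x in (0:ℝ)..1, x ^ (p-1) * (1-x) ^ (q-1) := by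
    have := hc
    rw [← Complex.ofReal_add] at this
    rw [Complex.Gamma_ofReal, Complex.Gamma_ofReal, Complex.Gamma_ofReal] at this
    exact_mod_cast this
  rw [eq_div_iff hne]; linarith [hr]

lemma beta_integrable {p q : ℝ} (hp : 0 < p) (hq : 0 < q) :
    IntegrableOn (fun x => x ^ (p-1) * (1-x) ^ (q-1)) (Ioo (0:ℝ) 1) := by
  have hC : IntervalIntegrable
      (fun x : ℝ => ((x:ℂ) ^ ((p:ℂ)-1) * ((1:ℂ)-(x:ℂ)) ^ ((q:ℂ)-1))) volume 0 1 :=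
    Complex.betaIntegral_convergent (by simpa using hp) (by simpa using hq)
  have hN := hC.norm
  have h1 : IntegrableOn
      (fun x : ℝ => ‖(x:ℂ) ^ ((p:ℂ)-1) * ((1:ℂ)-(x:ℂ)) ^ ((q:ℂ)-1)‖) (Ioo (0:ℝ) 1) := by
    have := (intervalIntegrable_iff_integrableOn_Ioc_of_le (by norm_num : (0:ℝ) ≤ 1)).mp hN
    exact this.mono_set Ioo_subset_Ioc_self
  refine h1.congr_fun (fun x hx => ?_) measurableSet_Ioo
  have hx0 : 0 < x := hx.1
  have hx1 : 0 < 1 - x := by linarith [hx.2]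
  have hxc : ((1:ℂ) - (x:ℂ)) = ((1-x : ℝ) : ℂ) := by push_cast; ring
  beta_reduce
  rw [norm_mul, hxc,
    Complex.norm_cpow_eq_rpow_re_of_pos hx0, Complex.norm_cpow_eq_rpow_re_of_pos hx1]
  norm_num

lemma W_integrable {p q : ℝ} (hp : 0 < p) (hq : 0 < q) :
    IntegrableOn (fun x => x ^ (p-1) * (1-x^2) ^ (q-1)) (Ioo (0:ℝ) 1) := by
  set c : ℝ := max 1 (2 ^ (q-1)) with hc
  have hbound : Integrable (fun x => c * (x ^ (p-1) * (1-x) ^ (q-1)))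
      (volume.restrict (Ioo (0:ℝ) 1)) := (beta_integrable hp hq).const_mul c
  refine Integrable.mono' hbound ?_ ?_
  · apply ContinuousOn.aestronglyMeasurable ?_ measurableSet_Ioo
    apply ContinuousOn.mul
    · exact fun x hx =>
        (Real.continuousAt_rpow_const x _ (Or.inl hx.1.ne')).continuousWithinAt
    · intro x hx
      have h2 : (1:ℝ) - x^2 ≠ 0 := by nlinarith [hx.1, hx.2]
      exact (((continuous_const.sub (continuous_pow 2)).continuousAt).rpow_const
        (Or.inl h2)).continuousWithinAt
  · filter_upwards [ae_restrict_mem measurableSet_Ioo] with x hx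
    have hx0 : (0:ℝ) < x := hx.1
    have hx1 : x < 1 := hx.2
    have h1x : (0:ℝ) ≤ 1 - x := by linarith
    have h1px : (0:ℝ) ≤ 1 + x := by linarith
    have hsplit : (1 - x^2 : ℝ) = (1-x) * (1+x) := by ring
    rw [Real.norm_eq_abs, abs_mul, abs_of_nonneg (Real.rpow_nonneg hx0.le _),
      abs_of_nonneg (Real.rpow_nonneg (by nlinarith : (0:ℝ) ≤ 1 - x^2) _), hsplit,
      Real.mul_rpow h1x h1px]
    have hle : (1+x) ^ (q-1) ≤ c := by
      rcases le_or_gt 0 (q-1) with hq1 | hq1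
      · exact le_trans (Real.rpow_le_rpow h1px (by linarith) hq1) (le_max_right _ _)
      · exact le_trans (Real.rpow_le_one_of_one_le_of_nonpos (by linarith) hq1.le)
          (le_max_left _ _)
    have hnn : 0 ≤ x ^ (p-1) * (1-x) ^ (q-1) :=
      mul_nonneg (Real.rpow_nonneg hx0.le _) (Real.rpow_nonneg h1x _)
    calc x ^ (p-1) * ((1-x) ^ (q-1) * (1+x) ^ (q-1))
        = (x ^ (p-1) * (1-x) ^ (q-1)) * (1+x) ^ (q-1) := by ring
      _ ≤ (x ^ (p-1) * (1-x) ^ (q-1)) * c := mul_le_mul_of_nonneg_left hle hnn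
      _ = c * (x ^ (p-1) * (1-x) ^ (q-1)) := by ring

lemma mul_W_integrable {p q M : ℝ} (hp : 0 < p) (hq : 0 < q) {g : ℝ → ℝ}
    (hgc : ContinuousOn g (Ioo (0:ℝ) 1)) (hgb : ∀ x ∈ Ioo (0:ℝ) 1, |g x| ≤ M) :
    IntegrableOn (fun x => g x * x ^ (p-1) * (1-x^2) ^ (q-1)) (Ioo (0:ℝ) 1) := by
  have hbound : Integrable (fun x => M * (x ^ (p-1) * (1-x^2) ^ (q-1)))
      (volume.restrict (Ioo (0:ℝ) 1)) := (W_integrable hp hq).const_mul M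
  refine Integrable.mono' hbound ?_ ?_
  · apply ContinuousOn.aestronglyMeasurable ?_ measurableSet_Ioo
    apply ContinuousOn.mul
    apply ContinuousOn.mul hgc
    · exact fun x hx =>
        (Real.continuousAt_rpow_const x _ (Or.inl hx.1.ne')).continuousWithinAt
    · intro x hx
      have h2 : (1:ℝ) - x^2 ≠ 0 := by nlinarith [hx.1, hx.2]
      exact (((continuous_const.sub (continuous_pow 2)).continuousAt).rpow_const
        (Or.inl h2)).continuousWithinAt
  · filter_upwards [ae_restrict_mem measurableSet_Ioo] with x hx
    have hnn1 : (0:ℝ) ≤ x ^ (p-1) := Real.rpow_nonneg hx.1.le _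
    have hnn2 : (0:ℝ) ≤ (1-x^2) ^ (q-1) :=
      Real.rpow_nonneg (by nlinarith [hx.1, hx.2] : (0:ℝ) ≤ 1 - x^2) _
    rw [Real.norm_eq_abs, abs_mul, abs_mul, abs_of_nonneg hnn1, abs_of_nonneg hnn2]
    calc |g x| * x ^ (p-1) * (1-x^2) ^ (q-1)
        ≤ M * x ^ (p-1) * (1-x^2) ^ (q-1) := by
          gcongr
          exact hgb x hx
      _ = M * (x ^ (p-1) * (1-x^2) ^ (q-1)) := by ring

lemma shifted_beta {p q c : ℝ} (hp : 0 < p) (hq : 0 < q) (hc0 : 0 ≤ c) (hc1 : c < 1) :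
    ∫ v in Ioo c 1, (v - c) ^ (p-1) * (1-v) ^ (q-1)
      = (1-c) ^ (p+q-1) * (Real.Gamma p * Real.Gamma q / Real.Gamma (p+q)) := by
  set k : ℝ := 1 - c with hk
  have hk0 : 0 < k := by simp only [hk]; linarith
  have h1 : ∫ v in Ioo c 1, (v - c) ^ (p-1) * (1-v) ^ (q-1)
      = ∫ v in c..1, (v - c) ^ (p-1) * (1-v) ^ (q-1) := by
    rw [intervalIntegral.integral_of_le hc1.le, integral_Ioc_eq_integral_Ioo]
  have h2 : ∫ v in c..1, (v - c) ^ (p-1) * (1-v) ^ (q-1)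
      = ∫ y in (0:ℝ)..k, y ^ (p-1) * (k - y) ^ (q-1) := by
    have := intervalIntegral.integral_comp_add_left
      (a := (0:ℝ)) (b := k) (fun v => (v - c) ^ (p-1) * (1-v) ^ (q-1)) c
    rw [add_zero] at this
    rw [show c + k = 1 by simp [hk]] at this
    rw [← this]
    apply intervalIntegral.integral_congr
    intro y _
    have e1 : c + y - c = y := by ring
    have e2 : 1 - (c + y) = k - y := by simp [hk]; ring
    show (c + y - c) ^ (p-1) * (1 - (c + y)) ^ (q-1) = y ^ (p-1) * (k - y) ^ (q-1)
    rw [e1, e2]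
  have h3 : ∫ y in (0:ℝ)..k, y ^ (p-1) * (k - y) ^ (q-1)
      = k • ∫ x in (0:ℝ)..1, (x * k) ^ (p-1) * (k - x * k) ^ (q-1) := by
    rw [intervalIntegral.integral_comp_mul_right
      (fun y => y ^ (p-1) * (k - y) ^ (q-1)) hk0.ne']
    rw [smul_smul, mul_inv_cancel₀ hk0.ne', one_smul]
    norm_num
  have h4 : ∫ x in (0:ℝ)..1, (x * k) ^ (p-1) * (k - x * k) ^ (q-1)
      = (k ^ (p-1) * k ^ (q-1)) * ∫ x in (0:ℝ)..1, x ^ (p-1) * (1-x) ^ (q-1) := by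
    rw [← intervalIntegral.integral_const_mul]
    apply intervalIntegral.integral_congr
    intro x hx
    rw [Set.uIcc_of_le (by norm_num : (0:ℝ) ≤ 1)] at hx
    have hx0 : 0 ≤ x := hx.1
    have hx1 : 0 ≤ 1 - x := by linarith [hx.2]
    have e1 : (x * k) ^ (p-1) = x ^ (p-1) * k ^ (p-1) := Real.mul_rpow hx0 hk0.le
    have e2 : k - x * k = k * (1-x) := by ring
    have e3 : (k * (1-x)) ^ (q-1) = k ^ (q-1) * (1-x) ^ (q-1) := Real.mul_rpow hk0.le hx1
    show (x * k) ^ (p-1) * (k - x * k) ^ (q-1)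
      = k ^ (p-1) * k ^ (q-1) * (x ^ (p-1) * (1-x) ^ (q-1))
    rw [e1, e2, e3]; ring
  have hkpow : k * (k ^ (p-1) * k ^ (q-1)) = k ^ (p+q-1) := by
    rw [show (p+q-1 : ℝ) = 1 + (p-1+(q-1)) by ring, Real.rpow_add hk0,
      Real.rpow_add hk0, Real.rpow_one]
  rw [h1, h2, h3, h4, realBeta hp hq, smul_eq_mul, ← mul_assoc, hkpow]

/-- For `a₁ = a₂ + 2b₂`, `R_{a₁,b₁} ∘ R_{a₂,b₂} = (1/2) B(b₁,b₂) R_{a₂,b₁+b₂}`,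
where `B(b₁,b₂) = Γ(b₁)Γ(b₂)/Γ(b₁+b₂)` is the Beta function. -/
theorem stmt_1 (a₁ b₁ a₂ b₂ : ℝ) (ha₁ : 0 < a₁) (hb₁ : 0 < b₁) (ha₂ : 0 < a₂) (hb₂ : 0 < b₂)
    (h : a₁ = a₂ + 2 * b₂) (f : ℝ → ℝ) (hf : ContinuousOn f (Set.Ioo (-1) 1))
    (t : ℝ) (ht : t ∈ Set.Ioo (-1 : ℝ) 1) :
    Rab a₁ b₁ (Rab a₂ b₂ f) t
      = (1 / 2) * (Real.Gamma b₁ * Real.Gamma b₂ / Real.Gamma (b₁ + b₂))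
          * Rab a₂ (b₁ + b₂) f t := by
  have ht' : |t| < 1 := abs_lt.2 ⟨ht.1, ht.2⟩
  -- bound for f on the compact set [-|t|, |t|]
  obtain ⟨M, hM⟩ : ∃ M, ∀ y ∈ Icc (-|t|) |t|, ‖f y‖ ≤ M := by
    apply IsCompact.exists_bound_of_continuousOn isCompact_Icc
    exact hf.mono (fun y hy => ⟨lt_of_lt_of_le (neg_lt_neg ht') hy.1, lt_of_le_of_lt hy.2 ht'⟩)
  -- continuity and boundedness of x ↦ f (x * w) for |w| ≤ |t|
  have hfcb : ∀ w : ℝ, |w| ≤ |t| →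
      ContinuousOn (fun x => f (x * w)) (Ioo (0:ℝ) 1) ∧
        ∀ x ∈ Ioo (0:ℝ) 1, |f (x * w)| ≤ M := by
    intro w hw
    have hmem : ∀ x ∈ Ioo (0:ℝ) 1, x * w ∈ Icc (-|t|) |t| := by
      intro x hx
      have : |x * w| ≤ |t| := by
        rw [abs_mul]
        calc |x| * |w| ≤ 1 * |t| := by
              apply mul_le_mul _ hw (abs_nonneg _) zero_le_one
              rw [abs_of_pos hx.1]; exact hx.2.le
          _ = |t| := one_mul _
      exact ⟨neg_le_of_abs_le this, le_of_abs_le this⟩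
    constructor
    · apply hf.comp ((continuous_id.mul continuous_const).continuousOn)
      intro x hx
      have := hmem x hx
      exact ⟨lt_of_lt_of_le (neg_lt_neg ht') this.1, lt_of_le_of_lt this.2 ht'⟩
    · intro x hx
      exact hM _ (hmem x hx)
  have hst : ∀ s ∈ Ioo (0:ℝ) 1, |s * t| ≤ |t| := by
    intro s hs
    rw [abs_mul]
    calc |s| * |t| ≤ 1 * |t| := by
          apply mul_le_mul_of_nonneg_right _ (abs_nonneg t)
          rw [abs_of_pos hs.1]; exact hs.2.le
      _ = |t| := one_mul _
  -- the triangular-region integrand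
  set F : ℝ → ℝ → ℝ := fun s u =>
    f (u * t) * u ^ (a₂-1) * (s^2 - u^2) ^ (b₂-1) * (s * (1 - s^2) ^ (b₁-1)) with hF
  -- pointwise identity for the change of variables u = x * s
  have hpt : ∀ s ∈ Ioo (0:ℝ) 1, ∀ x ∈ Ioo (0:ℝ) 1,
      |s| • F s (x * s)
        = (f (x * (s * t)) * x ^ (a₂-1) * (1 - x^2) ^ (b₂-1))
            * (s ^ (a₁-1) * (1 - s^2) ^ (b₁-1)) := by
    intro s hs x hx
    have hs0 : (0:ℝ) < s := hs.1
    have e1 : (x*s) ^ (a₂-1) = x ^ (a₂-1) * s ^ (a₂-1) := Real.mul_rpow hx.1.le hs0.le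
    have e2 : s^2 - (x*s)^2 = s^2 * (1 - x^2) := by ring
    have e3 : (s^2 * (1 - x^2)) ^ (b₂-1) = (s^2) ^ (b₂-1) * (1 - x^2) ^ (b₂-1) :=
      Real.mul_rpow (sq_nonneg s) (by nlinarith [hx.1, hx.2])
    have e4 : ((s^2 : ℝ)) ^ (b₂-1) = s ^ (2*(b₂-1)) := by
      rw [← Real.rpow_natCast s 2, ← Real.rpow_mul hs0.le]
      norm_num
    have hss : (s * s : ℝ) = s ^ ((2:ℕ):ℝ) := by rw [Real.rpow_natCast]; ring
    have e5 : s ^ (a₂-1) * s ^ (2*(b₂-1)) * (s * s) = s ^ (a₁-1) := by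
      rw [hss, ← Real.rpow_add hs0, ← Real.rpow_add hs0]
      congr 1
      push_cast
      linarith [h]
    rw [smul_eq_mul, abs_of_pos hs0]
    simp only [hF]
    rw [e1, e2, e3, e4, mul_assoc x s t]
    calc s * (f (x * (s * t)) * (x ^ (a₂-1) * s ^ (a₂-1))
          * (s ^ (2*(b₂-1)) * (1 - x^2) ^ (b₂-1)) * (s * (1 - s^2) ^ (b₁-1)))
        = (f (x * (s * t)) * x ^ (a₂-1) * (1 - x^2) ^ (b₂-1))
            * ((s ^ (a₂-1) * s ^ (2*(b₂-1)) * (s * s)) * (1 - s^2) ^ (b₁-1)) := by ring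
      _ = (f (x * (s * t)) * x ^ (a₂-1) * (1 - x^2) ^ (b₂-1))
            * (s ^ (a₁-1) * (1 - s^2) ^ (b₁-1)) := by rw [e5]
  -- change of variables u = x*s on Ioo 0 s
  have hCOV1 : ∀ s ∈ Ioo (0:ℝ) 1, ∀ g : ℝ → ℝ,
      ∫ u in Ioo (0:ℝ) s, g u = ∫ x in Ioo (0:ℝ) 1, |s| • g (x * s) := by
    intro s hs g
    have himg : (fun x => x * s) '' Ioo (0:ℝ) 1 = Ioo 0 s := by
      rw [Set.image_mul_right_Ioo _ _ hs.1, zero_mul, one_mul]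
    rw [← himg]
    exact integral_image_eq_integral_abs_deriv_smul measurableSet_Ioo
      (fun x _ => (hasDerivAt_mul_const s).hasDerivWithinAt)
      ((mul_left_injective₀ hs.1.ne').injOn) g
  -- step 1: rewrite the outer integrand
  have key1 : ∀ s ∈ Ioo (0:ℝ) 1,
      Rab a₂ b₂ f (s * t) * s ^ (a₁-1) * (1 - s^2) ^ (b₁-1)
        = ∫ u in Ioo (0:ℝ) s, F s u := by
    intro s hs
    rw [hCOV1 s hs (F s)]
    rw [setIntegral_congr_fun measurableSet_Ioo (fun x hx => hpt s hs x hx)]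
    rw [MeasureTheory.integral_mul_const]
    have hR : Rab a₂ b₂ f (s * t)
        = ∫ x in Ioo (0:ℝ) 1, f (x * (s * t)) * x ^ (a₂-1) * (1 - x^2) ^ (b₂-1) := by
      rw [Rab, intervalIntegral.integral_of_le zero_le_one, integral_Ioc_eq_integral_Ioo]
    rw [hR]; ring
  -- step 2: the inner s-integral after Fubini
  have key2 : ∀ u ∈ Ioo (0:ℝ) 1,
      ∫ s in Ioo u 1, F s u
        = (f (u * t) * u ^ (a₂-1)) * ((1/2) * ((1 - u^2) ^ (b₂+b₁-1)
            * (Real.Gamma b₂ * Real.Gamma b₁ / Real.Gamma (b₂ + b₁)))) := by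
    intro u hu
    have hu0 : (0:ℝ) < u := hu.1
    have hu1 : u < 1 := hu.2
    have hsq_img : (fun s : ℝ => s^2) '' Ioo u 1 = Ioo (u^2) 1 := by
      ext y
      constructor
      · rintro ⟨x, hx, rfl⟩
        simp only [Set.mem_Ioo]
        exact ⟨by nlinarith [hx.1, hx.2], by nlinarith [hx.1, hx.2]⟩
      · intro hy
        have hy0 : (0:ℝ) ≤ y := le_trans (sq_nonneg u) hy.1.le
        refine ⟨Real.sqrt y, ⟨?_, ?_⟩, Real.sq_sqrt hy0⟩
        · exact (Real.lt_sqrt hu0.le).2 hy.1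
        · have := Real.sqrt_lt_sqrt hy0 hy.2
          simpa using this
    have hderiv : ∀ s ∈ Ioo u 1, HasDerivWithinAt (fun s : ℝ => s^2) (2*s) (Ioo u 1) s := by
      intro s _
      have := (hasDerivAt_pow 2 s).hasDerivWithinAt (s := Ioo u 1)
      simpa using this
    have hinj : InjOn (fun s : ℝ => s^2) (Ioo u 1) := by
      intro p hp q hq hpq
      have hp0 : (0:ℝ) ≤ p := le_of_lt (lt_trans hu0 hp.1)
      have hq0 : (0:ℝ) ≤ q := le_of_lt (lt_trans hu0 hq.1)
      simp only at hpq
      rw [← Real.sqrt_sq hp0, ← Real.sqrt_sq hq0, hpq]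
    have himage := integral_image_eq_integral_abs_deriv_smul measurableSet_Ioo hderiv hinj
      (fun v => (1/2) * ((v - u^2) ^ (b₂-1) * (1 - v) ^ (b₁-1)))
    rw [hsq_img] at himage
    have hc1 : ∫ s in Ioo u 1, F s u
        = (f (u * t) * u ^ (a₂-1))
            * ∫ s in Ioo u 1, |2*s| • ((1/2) * ((s^2 - u^2) ^ (b₂-1) * (1 - s^2) ^ (b₁-1))) := by
      rw [← MeasureTheory.integral_const_mul]
      apply setIntegral_congr_fun measurableSet_Ioo
      intro s hs
      have hs0 : (0:ℝ) < s := lt_trans hu0 hs.1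
      simp only [hF, smul_eq_mul, abs_of_pos (by linarith : (0:ℝ) < 2*s)]
      ring
    rw [hc1, ← himage, MeasureTheory.integral_const_mul,
      shifted_beta hb₂ hb₁ (sq_nonneg u) (by nlinarith : u^2 < 1)]
  -- the product-space integrand
  set T : Set (ℝ × ℝ) := {p | 0 < p.2 ∧ p.2 < p.1 ∧ p.1 < 1} with hT
  have hTopen : IsOpen T := by
    have h1 : IsOpen {p : ℝ × ℝ | 0 < p.2} := isOpen_lt continuous_const continuous_snd
    have h2 : IsOpen {p : ℝ × ℝ | p.2 < p.1} := isOpen_lt continuous_snd continuous_fst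
    have h3 : IsOpen {p : ℝ × ℝ | p.1 < 1} := isOpen_lt continuous_fst continuous_const
    have : T = {p : ℝ × ℝ | 0 < p.2} ∩ ({p | p.2 < p.1} ∩ {p | p.1 < 1}) := by
      ext p; simp [hT, and_assoc]
    rw [this]
    exact h1.inter (h2.inter h3)
  set Φ : ℝ × ℝ → ℝ := T.indicator (fun p => F p.1 p.2) with hΦ
  have hΦrow : ∀ s ∈ Ioo (0:ℝ) 1, (fun u => Φ (s, u)) = (Ioo 0 s).indicator (F s) := by
    intro s hs
    funext u
    by_cases hu : u ∈ Ioo 0 s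
    · rw [Set.indicator_of_mem hu]
      exact Set.indicator_of_mem (show (s,u) ∈ T from ⟨hu.1, hu.2, hs.2⟩) _
    · rw [Set.indicator_of_notMem hu]
      refine Set.indicator_of_notMem (fun hmem => hu ⟨hmem.1, hmem.2.1⟩) _
  have hΦrow0 : ∀ s : ℝ, s ∉ Ioo (0:ℝ) 1 → (fun u => Φ (s, u)) = 0 := by
    intro s hs
    funext u
    refine Set.indicator_of_notMem (fun hmem => hs ⟨lt_trans hmem.1 hmem.2.1, hmem.2.2⟩) _
  have hΦcol : ∀ u ∈ Ioo (0:ℝ) 1,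
      (fun s => Φ (s, u)) = (Ioo u 1).indicator (fun s => F s u) := by
    intro u hu
    funext s
    by_cases hsm : s ∈ Ioo u 1
    · rw [Set.indicator_of_mem hsm]
      exact Set.indicator_of_mem (show (s,u) ∈ T from ⟨hu.1, hsm.1, hsm.2⟩) _
    · rw [Set.indicator_of_notMem hsm]
      refine Set.indicator_of_notMem (fun hmem => hsm ⟨hmem.2.1, hmem.2.2⟩) _
  have hΦcol0 : ∀ u : ℝ, u ∉ Ioo (0:ℝ) 1 → (fun s => Φ (s, u)) = 0 := by
    intro u hu
    funext s
    refine Set.indicator_of_notMem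
      (fun hmem => hu ⟨hmem.1, lt_trans hmem.2.1 hmem.2.2⟩) _
  -- measurability of Φ
  have hGcont : ContinuousOn (fun p : ℝ × ℝ => F p.1 p.2) T := by
    have c1 : ContinuousOn (fun p : ℝ × ℝ => f (p.2 * t)) T := by
      apply hf.comp ((continuous_snd.mul continuous_const).continuousOn)
      intro p hp
      have hp2 : 0 < p.2 := hp.1
      have hp21 : p.2 < 1 := lt_trans hp.2.1 hp.2.2
      have : |p.2 * t| < 1 := by
        rw [abs_mul, abs_of_pos hp2]
        nlinarith [abs_nonneg t, ht']
      exact abs_lt.mp this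
    have c2 : ContinuousOn (fun p : ℝ × ℝ => p.2 ^ (a₂-1)) T := by
      intro p hp
      exact ((Real.continuousAt_rpow_const _ _ (Or.inl hp.1.ne')).comp
        continuousAt_snd).continuousWithinAt
    have c3 : ContinuousOn (fun p : ℝ × ℝ => (p.1^2 - p.2^2) ^ (b₂-1)) T := by
      intro p hp
      have hne : p.1^2 - p.2^2 ≠ 0 := by nlinarith [hp.1, hp.2.1, hp.2.2]
      exact (((continuous_fst.pow 2).sub (continuous_snd.pow 2)).continuousAt.rpow_const
        (Or.inl hne)).continuousWithinAt
    have c4 : ContinuousOn (fun p : ℝ × ℝ => p.1 * (1 - p.1^2) ^ (b₁-1)) T := by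
      apply continuous_fst.continuousOn.mul
      intro p hp
      have hne : (1:ℝ) - p.1^2 ≠ 0 := by nlinarith [hp.1, hp.2.1, hp.2.2]
      exact ((continuous_const.sub (continuous_fst.pow 2)).continuousAt.rpow_const
        (Or.inl hne)).continuousWithinAt
    exact ((c1.mul c2).mul c3).mul c4
  have hmeasΦ : AEStronglyMeasurable Φ (volume.prod volume) :=
    (aestronglyMeasurable_indicator_iff hTopen.measurableSet).2
      (hGcont.aestronglyMeasurable hTopen.measurableSet)
  -- integrability of the rows
  have hrowInt : ∀ s ∈ Ioo (0:ℝ) 1, IntegrableOn (F s) (Ioo 0 s) := by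
    intro s hs
    have himg : (fun x => x * s) '' Ioo (0:ℝ) 1 = Ioo 0 s := by
      rw [Set.image_mul_right_Ioo _ _ hs.1, zero_mul, one_mul]
    rw [← himg, integrableOn_image_iff_integrableOn_abs_deriv_smul measurableSet_Ioo
      (fun x _ => (hasDerivAt_mul_const s).hasDerivWithinAt)
      ((mul_left_injective₀ hs.1.ne').injOn) (F s)]
    have hbig : IntegrableOn
        (fun x => (f (x * (s * t)) * x ^ (a₂-1) * (1 - x^2) ^ (b₂-1))
          * (s ^ (a₁-1) * (1 - s^2) ^ (b₁-1))) (Ioo (0:ℝ) 1) :=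
      (mul_W_integrable ha₂ hb₂ (hfcb _ (hst s hs)).1 (hfcb _ (hst s hs)).2).mul_const _
    exact hbig.congr_fun (fun x hx => (hpt s hs x hx).symm) measurableSet_Ioo
  -- bound for the iterated norm integral
  set C : ℝ := ∫ x in Ioo (0:ℝ) 1, x ^ (a₂-1) * (1 - x^2) ^ (b₂-1) with hC
  have hbigInt : ∀ s ∈ Ioo (0:ℝ) 1, IntegrableOn
      (fun x => (f (x * (s * t)) * x ^ (a₂-1) * (1 - x^2) ^ (b₂-1))
        * (s ^ (a₁-1) * (1 - s^2) ^ (b₁-1))) (Ioo (0:ℝ) 1) := fun s hs =>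
    (mul_W_integrable ha₂ hb₂ (hfcb _ (hst s hs)).1 (hfcb _ (hst s hs)).2).mul_const _
  have hnorm : ∀ s ∈ Ioo (0:ℝ) 1,
      ∫ u, ‖Φ (s, u)‖ ≤ (M * C) * (s ^ (a₁-1) * (1 - s^2) ^ (b₁-1)) := by
    intro s hs
    have hcfac : (0:ℝ) ≤ s ^ (a₁-1) * (1 - s^2) ^ (b₁-1) :=
      mul_nonneg (Real.rpow_nonneg hs.1.le _)
        (Real.rpow_nonneg (by nlinarith [hs.1, hs.2] : (0:ℝ) ≤ 1 - s^2) _)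
    have e0 : (fun u => ‖Φ (s, u)‖) = (Ioo 0 s).indicator (fun u => ‖F s u‖) := by
      funext u
      rw [congrFun (hΦrow s hs) u]
      exact norm_indicator_eq_indicator_norm _ _
    rw [e0, MeasureTheory.integral_indicator measurableSet_Ioo, hCOV1 s hs (fun u => ‖F s u‖)]
    have e1 : ∀ x ∈ Ioo (0:ℝ) 1, |s| • ‖F s (x * s)‖
        = ‖(f (x * (s * t)) * x ^ (a₂-1) * (1 - x^2) ^ (b₂-1))
            * (s ^ (a₁-1) * (1 - s^2) ^ (b₁-1))‖ := by
      intro x hx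
      rw [← hpt s hs x hx, smul_eq_mul, smul_eq_mul, Real.norm_eq_abs, Real.norm_eq_abs,
        abs_mul |s| (F s (x * s)), abs_abs]
    rw [setIntegral_congr_fun measurableSet_Ioo e1]
    have e2 : (M * C) * (s ^ (a₁-1) * (1 - s^2) ^ (b₁-1))
        = ∫ x in Ioo (0:ℝ) 1,
            (M * (x ^ (a₂-1) * (1 - x^2) ^ (b₂-1))) * (s ^ (a₁-1) * (1 - s^2) ^ (b₁-1)) := by
      rw [MeasureTheory.integral_mul_const, MeasureTheory.integral_const_mul]
    rw [e2]
    have hle : ∀ x ∈ Ioo (0:ℝ) 1,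
        ‖(f (x * (s * t)) * x ^ (a₂-1) * (1 - x^2) ^ (b₂-1))
            * (s ^ (a₁-1) * (1 - s^2) ^ (b₁-1))‖
          ≤ (M * (x ^ (a₂-1) * (1 - x^2) ^ (b₂-1))) * (s ^ (a₁-1) * (1 - s^2) ^ (b₁-1)) := by
      intro x hx
      have hx2 : (0:ℝ) ≤ 1 - x^2 := by nlinarith [hx.1, hx.2]
      rw [Real.norm_eq_abs, abs_mul, abs_mul, abs_mul,
        abs_of_nonneg (Real.rpow_nonneg hx.1.le (a₂-1)),
        abs_of_nonneg (Real.rpow_nonneg hx2 (b₂-1)), abs_of_nonneg hcfac]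
      have hfb := (hfcb _ (hst s hs)).2 x hx
      have hW : (0:ℝ) ≤ x ^ (a₂-1) * (1 - x^2) ^ (b₂-1) :=
        mul_nonneg (Real.rpow_nonneg hx.1.le _) (Real.rpow_nonneg hx2 _)
      apply mul_le_mul_of_nonneg_right _ hcfac
      calc |f (x * (s * t))| * x ^ (a₂-1) * (1 - x^2) ^ (b₂-1)
          = |f (x * (s * t))| * (x ^ (a₂-1) * (1 - x^2) ^ (b₂-1)) := by ring
        _ ≤ M * (x ^ (a₂-1) * (1 - x^2) ^ (b₂-1)) := mul_le_mul_of_nonneg_right hfb hW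
    exact setIntegral_mono_on ((hbigInt s hs).norm)
      (((W_integrable ha₂ hb₂).const_mul M).mul_const _) measurableSet_Ioo hle
  -- the iterated norm integral is integrable
  have hniInt : Integrable (fun s => ∫ u, ‖Φ (s, u)‖) volume := by
    refine Integrable.mono'
      ((integrable_indicator_iff measurableSet_Ioo).2
        (((W_integrable ha₁ hb₁).const_mul (M * C))))
      (hmeasΦ.norm.integral_prod_right') ?_
    apply Filter.Eventually.of_forall
    intro s
    by_cases hs : s ∈ Ioo (0:ℝ) 1
    · rw [Set.indicator_of_mem hs, Real.norm_eq_abs,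
        abs_of_nonneg (integral_nonneg fun u => norm_nonneg _)]
      exact hnorm s hs
    · rw [Set.indicator_of_notMem hs]
      have hz : ∀ u, Φ (s, u) = 0 := fun u => congrFun (hΦrow0 s hs) u
      simp [hz]
  have hΦInt : Integrable Φ (volume.prod volume) := by
    refine (integrable_prod_iff hmeasΦ).2 ⟨?_, hniInt⟩
    apply Filter.Eventually.of_forall
    intro s
    by_cases hs : s ∈ Ioo (0:ℝ) 1
    · rw [show (fun u => Φ (s, u)) = (Ioo 0 s).indicator (F s) from hΦrow s hs]
      exact (integrable_indicator_iff measurableSet_Ioo).2 (hrowInt s hs)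
    · rw [show (fun u => Φ (s, u)) = 0 from hΦrow0 s hs]
      exact integrable_zero _ _ _
  -- assemble everything
  calc Rab a₁ b₁ (Rab a₂ b₂ f) t
      = ∫ s in Ioo (0:ℝ) 1, Rab a₂ b₂ f (s * t) * s ^ (a₁-1) * (1 - s^2) ^ (b₁-1) := by
        rw [show Rab a₁ b₁ (Rab a₂ b₂ f) t
            = ∫ s in (0:ℝ)..1, Rab a₂ b₂ f (s * t) * s ^ (a₁-1) * (1 - s^2) ^ (b₁-1) from rfl,
          intervalIntegral.integral_of_le zero_le_one, integral_Ioc_eq_integral_Ioo]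
    _ = ∫ s, ∫ u, Φ (s, u) := by
        have e3 : ∫ s, ∫ u, Φ (s, u) = ∫ s in Ioo (0:ℝ) 1, ∫ u, Φ (s, u) :=
          (setIntegral_eq_integral_of_forall_compl_eq_zero
            (f := fun s => ∫ u, Φ (s, u)) (fun s hs => by
              have hz : ∀ u, Φ (s, u) = 0 := fun u => congrFun (hΦrow0 s hs) u
              simp only [hz, MeasureTheory.integral_zero])).symm
        rw [e3]
        apply setIntegral_congr_fun measurableSet_Ioo
        intro s hs
        show Rab a₂ b₂ f (s * t) * s ^ (a₁-1) * (1 - s^2) ^ (b₁-1) = ∫ u, Φ (s, u)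
        rw [key1 s hs, hΦrow s hs, MeasureTheory.integral_indicator measurableSet_Ioo]
    _ = ∫ u, ∫ s, Φ (s, u) := by
        have hunc : Function.uncurry (fun s u => Φ (s, u)) = Φ := by
          ext p; simp [Function.uncurry]
        exact integral_integral_swap (by rw [hunc]; exact hΦInt)
    _ = ∫ u in Ioo (0:ℝ) 1, ∫ s, Φ (s, u) :=
        (setIntegral_eq_integral_of_forall_compl_eq_zero
          (f := fun u => ∫ s, Φ (s, u)) (fun u hu => by
            have hz : ∀ s, Φ (s, u) = 0 := fun s => congrFun (hΦcol0 u hu) s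
            simp only [hz, MeasureTheory.integral_zero])).symm
    _ = ∫ u in Ioo (0:ℝ) 1, (f (u * t) * u ^ (a₂-1)) * ((1/2) * ((1 - u^2) ^ (b₂+b₁-1)
          * (Real.Gamma b₂ * Real.Gamma b₁ / Real.Gamma (b₂ + b₁)))) := by
        apply setIntegral_congr_fun measurableSet_Ioo
        intro u hu
        show ∫ s, Φ (s, u) = _
        rw [hΦcol u hu, MeasureTheory.integral_indicator measurableSet_Ioo]
        exact key2 u hu
    _ = ((1/2) * (Real.Gamma b₁ * Real.Gamma b₂ / Real.Gamma (b₁ + b₂)))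
          * ∫ u in Ioo (0:ℝ) 1, f (u * t) * u ^ (a₂-1) * (1 - u^2) ^ (b₁+b₂-1) := by
        rw [← MeasureTheory.integral_const_mul]
        apply setIntegral_congr_fun measurableSet_Ioo
        intro u hu
        rw [show b₂+b₁-1 = b₁+b₂-1 by ring,
          show Real.Gamma b₂ * Real.Gamma b₁ = Real.Gamma b₁ * Real.Gamma b₂ by ring,
          show b₂+b₁ = b₁+b₂ by ring]
        ring
    _ = (1 / 2) * (Real.Gamma b₁ * Real.Gamma b₂ / Real.Gamma (b₁ + b₂))
          * Rab a₂ (b₁ + b₂) f t := by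
        rw [show Rab a₂ (b₁+b₂) f t
            = ∫ s in (0:ℝ)..1, f (s * t) * s ^ (a₂-1) * (1 - s^2) ^ (b₁+b₂-1) from rfl,
          intervalIntegral.integral_of_le zero_le_one, integral_Ioc_eq_integral_Ioo]
end

section
/- For a > 0, the operator Q_{a,1} defined by (Q_{a,1} g)(s) = a·g(s) + s·g'(s) is a left and right inverse of R_{a,1} on smooth functions: for every g ∈ C^∞[-1,1], R_{a,1}(Q_{a,1} g) = g and Q_{a,1}(R_{a,1} g) = g. -/
open Set MeasureTheory intervalIntegral Filter Topology

/-- The operator `Q_{a,1}`, `(Q_{a,1} g)(s) = a g(s) + s g'(s)`, derivatives taken within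
`[-1,1]` (one-sided at the endpoints). -/
noncomputable def Qa1 (a : ℝ) (g : ℝ → ℝ) (s : ℝ) : ℝ :=
  a * g s + s * derivWithin g (Set.Icc (-1) 1) s

lemma aux_mem {s t : ℝ} (hs0 : 0 ≤ s) (hs1 : s ≤ 1) (ht : t ∈ Set.Icc (-1:ℝ) 1) :
    s * t ∈ Set.Icc (-1:ℝ) 1 := by
  obtain ⟨h1, h2⟩ := ht
  constructor <;> nlinarith

/-- Key FTC computation. -/
lemma key (a : ℝ) (ha : 0 < a) (g : ℝ → ℝ) (hg : ContDiffOn ℝ (⊤ : ℕ∞) g (Set.Icc (-1) 1)) {t : ℝ}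
    (ht : t ∈ Set.Icc (-1:ℝ) 1) :
    ∫ s in (0:ℝ)..1,
      (a * g (s * t) + s * t * derivWithin g (Set.Icc (-1) 1) (s * t)) * s ^ (a - 1) = g t := by
  set dg := derivWithin g (Set.Icc (-1) 1) with hdg
  have hmap : Set.MapsTo (fun s : ℝ => s * t) (Set.Icc 0 1) (Set.Icc (-1:ℝ) 1) :=
    fun s hs => aux_mem hs.1 hs.2 ht
  have hgc : ContinuousOn (fun s : ℝ => g (s * t)) (Set.Icc 0 1) :=
    hg.continuousOn.comp ((continuous_id.mul continuous_const : Continuous fun s : ℝ => s * t).continuousOn) hmap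
  have hdgc0 : ContinuousOn dg (Set.Icc (-1:ℝ) 1) :=
    hg.continuousOn_derivWithin (uniqueDiffOn_Icc (by norm_num)) (by simp)
  have hdgc : ContinuousOn (fun s : ℝ => dg (s * t)) (Set.Icc 0 1) :=
    hdgc0.comp ((continuous_id.mul continuous_const : Continuous fun s : ℝ => s * t).continuousOn) hmap
  have hc : ContinuousOn (fun s : ℝ => a * g (s * t) + s * t * dg (s * t)) (Set.Icc 0 1) :=
    (continuousOn_const.mul hgc).add
      (((continuous_id.mul continuous_const : Continuous fun s : ℝ => s * t).continuousOn).mul hdgc)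
  have hint : IntervalIntegrable
      (fun s : ℝ => (a * g (s * t) + s * t * dg (s * t)) * s ^ (a - 1)) volume 0 1 := by
    refine (intervalIntegrable_rpow' (by linarith)).continuousOn_mul ?_
    rwa [uIcc_of_le zero_le_one]
  have hpowc : Continuous (fun s : ℝ => s ^ a) := by
    rw [continuous_iff_continuousAt]
    exact fun x => Real.continuousAt_rpow_const x a (Or.inr ha.le)
  have hcont : ContinuousOn (fun s : ℝ => s ^ a * g (s * t)) (Set.Icc 0 1) :=
    hpowc.continuousOn.mul hgc
  have hderiv : ∀ x ∈ Set.Ioo (0:ℝ) 1,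
      HasDerivWithinAt (fun s : ℝ => s ^ a * g (s * t))
        ((a * g (x * t) + x * t * dg (x * t)) * x ^ (a - 1)) (Set.Ioi x) x := by
    intro x hx
    have hxt : x * t ∈ Set.Ioo (-1:ℝ) 1 := by
      obtain ⟨h1, h2⟩ := ht
      constructor <;> nlinarith [hx.1, hx.2]
    have hdiff : DifferentiableWithinAt ℝ g (Set.Icc (-1:ℝ) 1) (x * t) :=
      (hg.differentiableOn (by simp)) _ (Set.Ioo_subset_Icc_self hxt)
    have hgd : HasDerivAt g (dg (x * t)) (x * t) :=
      hdiff.hasDerivWithinAt.hasDerivAt (Icc_mem_nhds hxt.1 hxt.2)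
    have h1 : HasDerivAt (fun s : ℝ => g (s * t)) (dg (x * t) * t) x :=
      HasDerivAt.comp x hgd (hasDerivAt_mul_const t)
    have h2 : HasDerivAt (fun s : ℝ => s ^ a) (a * x ^ (a - 1)) x :=
      Real.hasDerivAt_rpow_const (Or.inl hx.1.ne')
    have h3 := h2.mul h1
    have hxa : x ^ a = x ^ (a - 1) * x := by
      rw [← Real.rpow_add_one hx.1.ne']; ring_nf
    refine h3.hasDerivWithinAt.congr_deriv ?_
    rw [hxa]; ring
  have h := intervalIntegral.integral_eq_sub_of_hasDeriv_right_of_le zero_le_one hcont hderiv hint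
  rw [h]
  simp [Real.one_rpow, Real.zero_rpow ha.ne']

lemma Rab_one_eq (a : ℝ) (g : ℝ → ℝ) (t : ℝ) :
    Rab a 1 g t = ∫ s in (0:ℝ)..1, g (s * t) * s ^ (a - 1) := by
  simp [Rab]

lemma Rab_eq_of_pos (a : ℝ) (g : ℝ → ℝ) {t : ℝ} (ht : t ∈ Set.Ioc (0:ℝ) 1) :
    Rab a 1 g t = t ^ (-a) * ∫ u in (0:ℝ)..t, g u * u ^ (a - 1) := by
  have ht0 : 0 < t := ht.1
  have h1 : (∫ s in (0:ℝ)..1, g (s * t) * (s * t) ^ (a - 1))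
      = t⁻¹ * ∫ u in (0:ℝ)..t, g u * u ^ (a - 1) := by
    have := intervalIntegral.integral_comp_mul_right (a := 0) (b := 1)
      (f := fun u => g u * u ^ (a - 1)) ht0.ne'
    simpa using this
  have h2 : (∫ s in (0:ℝ)..1, g (s * t) * (s * t) ^ (a - 1))
      = (∫ s in (0:ℝ)..1, g (s * t) * s ^ (a - 1)) * t ^ (a - 1) := by
    rw [← intervalIntegral.integral_mul_const]
    apply intervalIntegral.integral_congr
    intro s hs
    rw [uIcc_of_le zero_le_one] at hs
    show g (s * t) * (s * t) ^ (a - 1) = g (s * t) * s ^ (a - 1) * t ^ (a - 1)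
    rw [Real.mul_rpow hs.1 ht0.le]; ring
  have hta : (0:ℝ) < t ^ (a - 1) := Real.rpow_pos_of_pos ht0 _
  have key2 : t ^ (-a) = t⁻¹ * (t ^ (a - 1))⁻¹ := by
    rw [← Real.rpow_neg_one t, ← Real.rpow_neg ht0.le, ← Real.rpow_add ht0]; ring_nf
  rw [Rab_one_eq, key2]
  have h3 := h2.symm.trans h1
  field_simp at h3 ⊢
  have e : ∀ s, g (t * s) = g (s * t) := fun s => by rw [mul_comm]
  simp only [e]
  linear_combination h3

lemma H_hasDeriv (a : ℝ) (ha : 0 < a) (g : ℝ → ℝ)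
    (hg : ContDiffOn ℝ (⊤ : ℕ∞) g (Set.Icc (-1) 1)) {t : ℝ} (ht : t ∈ Set.Ioc (0:ℝ) 1) :
    HasDerivWithinAt (fun x => ∫ u in (0:ℝ)..x, g u * u ^ (a - 1))
      (g t * t ^ (a - 1)) (Set.Icc (-1:ℝ) 1) t := by
  have hfc : ContinuousOn (fun u : ℝ => g u * u ^ (a - 1)) (Set.Ioc (0:ℝ) 1) := by
    refine (hg.continuousOn.mono ?_).mul ?_
    · intro u hu; exact ⟨by linarith [hu.1], hu.2⟩
    · intro u hu
      exact (Real.continuousAt_rpow_const u _ (Or.inl hu.1.ne')).continuousWithinAt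
  have hint : IntervalIntegrable (fun u : ℝ => g u * u ^ (a - 1)) volume 0 t := by
    refine (intervalIntegrable_rpow' (by linarith)).continuousOn_mul ?_
    rw [uIcc_of_le ht.1.le]
    exact hg.continuousOn.mono (fun u hu => ⟨by linarith [hu.1], le_trans hu.2 ht.2⟩)
  rcases eq_or_lt_of_le ht.2 with h1 | h1
  · -- t = 1
    have hmem : Set.Ioc (0:ℝ) 1 ∈ 𝓝[Set.Iic (1:ℝ)] (1:ℝ) := by
      have h' := Filter.inter_mem
        (mem_nhdsWithin_of_mem_nhds (Ioi_mem_nhds (by norm_num : (0:ℝ) < 1)))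
        (self_mem_nhdsWithin (s := Set.Iic (1:ℝ)) (a := (1:ℝ)))
      rwa [Set.Ioi_inter_Iic] at h'
    have hmeas : StronglyMeasurableAtFilter (fun u : ℝ => g u * u ^ (a - 1))
        (𝓝[Set.Iic (1:ℝ)] (1:ℝ)) volume :=
      ⟨Set.Ioc 0 1, hmem, hfc.aestronglyMeasurable measurableSet_Ioc⟩
    have hcw : ContinuousWithinAt (fun u : ℝ => g u * u ^ (a - 1)) (Set.Iic (1:ℝ)) 1 := by
      have := hfc.continuousWithinAt (x := 1) ⟨by norm_num, le_refl 1⟩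
      exact this.mono_of_mem_nhdsWithin hmem
    subst h1
    exact (intervalIntegral.integral_hasDerivWithinAt_right hint hmeas hcw).mono
      Set.Icc_subset_Iic_self
  · -- t < 1
    have hmeas : StronglyMeasurableAtFilter (fun u : ℝ => g u * u ^ (a - 1)) (𝓝 t) volume :=
      ⟨Set.Ioc 0 1, Ioc_mem_nhds ht.1 h1, hfc.aestronglyMeasurable measurableSet_Ioc⟩
    have hcont : ContinuousAt (fun u : ℝ => g u * u ^ (a - 1)) t := by
      have := hfc.continuousWithinAt (x := t) ⟨ht.1, ht.2⟩
      exact this.continuousAt (Ioc_mem_nhds ht.1 h1)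
    exact (intervalIntegral.integral_hasDerivAt_right hint hmeas hcont).hasDerivWithinAt

lemma Rab_hasDeriv_pos (a : ℝ) (ha : 0 < a) (g : ℝ → ℝ)
    (hg : ContDiffOn ℝ (⊤ : ℕ∞) g (Set.Icc (-1) 1)) {t : ℝ} (ht : t ∈ Set.Ioc (0:ℝ) 1) :
    HasDerivWithinAt (Rab a 1 g) ((g t - a * Rab a 1 g t) / t) (Set.Icc (-1:ℝ) 1) t := by
  have ht0 : 0 < t := ht.1
  set H : ℝ → ℝ := fun x => ∫ u in (0:ℝ)..x, g u * u ^ (a - 1) with hH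
  have hHd : HasDerivWithinAt H (g t * t ^ (a - 1)) (Set.Icc (-1:ℝ) 1) t :=
    H_hasDeriv a ha g hg ht
  have hpow : HasDerivWithinAt (fun x : ℝ => x ^ (-a)) (-a * t ^ (-a - 1))
      (Set.Icc (-1:ℝ) 1) t :=
    (Real.hasDerivAt_rpow_const (Or.inl ht0.ne')).hasDerivWithinAt
  have hΦ := hpow.mul hHd
  have hsub : Set.Ioc (0:ℝ) 1 ⊆ Set.Icc (-1:ℝ) 1 :=
    fun x hx => ⟨by linarith [hx.1], hx.2⟩
  have hmem : Set.Ioc (0:ℝ) 1 ∈ 𝓝[Set.Icc (-1:ℝ) 1] t := by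
    have h' := Filter.inter_mem
      (mem_nhdsWithin_of_mem_nhds (Ioi_mem_nhds ht0))
      (self_mem_nhdsWithin (s := Set.Icc (-1:ℝ) 1) (a := t))
    refine Filter.mem_of_superset h' ?_
    rintro x ⟨hx1, hx2⟩
    exact ⟨hx1, hx2.2⟩
  have hF : HasDerivWithinAt (Rab a 1 g)
      (-a * t ^ (-a - 1) * H t + t ^ (-a) * (g t * t ^ (a - 1))) (Set.Ioc (0:ℝ) 1) t :=
    (hΦ.mono hsub).congr (fun y hy => Rab_eq_of_pos a g hy) (Rab_eq_of_pos a g ht)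
  have hF2 := hF.mono_of_mem_nhdsWithin hmem
  refine hF2.congr_deriv ?_
  rw [Rab_eq_of_pos a g ht]
  rw [Real.rpow_sub ht0 (-a) 1, Real.rpow_sub ht0 a 1, Real.rpow_one, Real.rpow_neg ht0.le]
  have hta : (0:ℝ) < t ^ a := Real.rpow_pos_of_pos ht0 _
  field_simp
  ring

lemma Rab_hasDeriv_neg (a : ℝ) (ha : 0 < a) (g : ℝ → ℝ)
    (hg : ContDiffOn ℝ (⊤ : ℕ∞) g (Set.Icc (-1) 1)) {t : ℝ} (ht : t ∈ Set.Ico (-1:ℝ) 0) :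
    HasDerivWithinAt (Rab a 1 g) ((g t - a * Rab a 1 g t) / t) (Set.Icc (-1:ℝ) 1) t := by
  have hg' : ContDiffOn ℝ (⊤ : ℕ∞) (fun x => g (-x)) (Set.Icc (-1:ℝ) 1) := by
    refine hg.comp (contDiff_id.neg).contDiffOn ?_
    intro x hx
    exact ⟨by linarith [hx.2], by linarith [hx.1]⟩
  have hRg : ∀ x, Rab a 1 g x = Rab a 1 (fun x => g (-x)) (-x) := by
    intro x
    simp [Rab, mul_neg, neg_neg]
  have hmt : -t ∈ Set.Ioc (0:ℝ) 1 := ⟨by linarith [ht.2], by linarith [ht.1]⟩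
  have h1 := Rab_hasDeriv_pos a ha _ hg' hmt
  have hneg : HasDerivWithinAt (fun x : ℝ => -x) (-1) (Set.Icc (-1:ℝ) 1) t :=
    (hasDerivAt_neg t).hasDerivWithinAt
  have h2 := HasDerivWithinAt.comp t h1 hneg
    (fun x hx => ⟨by linarith [hx.2], by linarith [hx.1]⟩)
  have hfun : (Rab a 1 (fun x => g (-x))) ∘ (fun x : ℝ => -x) = Rab a 1 g := by
    funext x
    simp [Function.comp, (hRg x).symm]
  rw [hfun] at h2
  refine h2.congr_deriv ?_
  rw [hRg t]
  have ht0 : t ≠ 0 := ne_of_lt ht.2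
  simp only [neg_neg]
  rw [div_neg]
  ring

/-- For `a > 0`, the operator `Q_{a,1}` is a left and right inverse of `R_{a,1}`
on `C^∞[-1,1]`. -/
theorem stmt_4 (a : ℝ) (ha : 0 < a) (g : ℝ → ℝ)
    (hg : ContDiffOn ℝ (⊤ : ℕ∞) g (Set.Icc (-1) 1)) :
    (∀ t ∈ Set.Icc (-1 : ℝ) 1, Rab a 1 (Qa1 a g) t = g t) ∧
    (∀ t ∈ Set.Icc (-1 : ℝ) 1, Qa1 a (Rab a 1 g) t = g t) := by
  have hudiff : UniqueDiffOn ℝ (Set.Icc (-1:ℝ) 1) := uniqueDiffOn_Icc (by norm_num)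
  constructor
  · intro t ht
    have h := key a ha g hg ht
    rw [← h]
    simp only [Rab, Qa1, sub_self, Real.rpow_zero, mul_one]
  · intro t ht
    have main : ∀ h : t ≠ 0,
        HasDerivWithinAt (Rab a 1 g) ((g t - a * Rab a 1 g t) / t) (Set.Icc (-1:ℝ) 1) t →
        Qa1 a (Rab a 1 g) t = g t := by
      intro h0 hd
      rw [Qa1, hd.derivWithin (hudiff t ht)]
      have : t * ((g t - a * Rab a 1 g t) / t) = g t - a * Rab a 1 g t := by
        field_simp
      rw [this]; ring
    rcases lt_trichotomy t 0 with h | h | h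
    · exact main (ne_of_lt h) (Rab_hasDeriv_neg a ha g hg ⟨ht.1, h⟩)
    · subst h
      rw [Qa1]
      simp only [zero_mul, add_zero]
      have hR : Rab a 1 g 0 = g 0 / a := by
        rw [Rab_one_eq]
        simp only [mul_zero]
        rw [intervalIntegral.integral_const_mul, integral_rpow (Or.inl (by linarith))]
        rw [sub_add_cancel, Real.one_rpow, Real.zero_rpow ha.ne']
        ring
      rw [hR]
      field_simp
    · exact main (ne_of_gt h) (Rab_hasDeriv_pos a ha g hg ⟨h, ht.2⟩)
end

section
/- For α > 0, the transform T_α : C(-1,1) → C(-1,1) defined by (T_α f)(s) = (1-s²)^{α/2} f(s) + α s ∫₀ˢ f(t)(1-t²)^{(α-2)/2} dt has the explicit two-sided inverse (T_α^{-1} g)(t) = (1-t²)^{-α/2} g(t) − α t ∫₀ᵗ g(s)(1-s²)^{-(α+2)/2} ds; that is, T_α^{-1}(T_α f) = f and T_α(T_α^{-1} g) = g for all continuous f, g on (-1,1). -/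
open Set MeasureTheory intervalIntegral

/-- The transform `T_α`, `(T_α f)(s) = (1-s²)^{α/2} f(s) + α s ∫₀ˢ f(t)(1-t²)^{(α-2)/2} dt`. -/
noncomputable def Talpha (α : ℝ) (f : ℝ → ℝ) (s : ℝ) : ℝ :=
  (1 - s ^ 2) ^ (α / 2) * f s + α * s * ∫ t in (0 : ℝ)..s, f t * (1 - t ^ 2) ^ ((α - 2) / 2)

/-- The candidate inverse transform,
`(T_α⁻¹ g)(t) = (1-t²)^{-α/2} g(t) - α t ∫₀ᵗ g(s)(1-s²)^{-(α+2)/2} ds`. -/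
noncomputable def Tinv (α : ℝ) (g : ℝ → ℝ) (t : ℝ) : ℝ :=
  (1 - t ^ 2) ^ (-α / 2) * g t - α * t * ∫ s in (0 : ℝ)..t, g s * (1 - s ^ 2) ^ (-(α + 2) / 2)

lemma aux_pos1 {s : ℝ} (hs : s ∈ Set.Ioo (-1:ℝ) 1) : (0:ℝ) < 1 - s ^ 2 := by
  nlinarith [hs.1, hs.2]

lemma aux_contPow (c : ℝ) : ContinuousOn (fun s : ℝ => (1 - s ^ 2) ^ c) (Set.Ioo (-1) 1) := by
  intro s hs
  exact (((continuous_const.sub (continuous_pow 2)).continuousAt).rpow_const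
    (Or.inl (aux_pos1 hs).ne')).continuousWithinAt

lemma aux_ftc (h : ℝ → ℝ) (hh : ContinuousOn h (Set.Ioo (-1:ℝ) 1)) {x : ℝ}
    (hx : x ∈ Set.Ioo (-1:ℝ) 1) :
    HasDerivAt (fun s => ∫ u in (0:ℝ)..s, h u) (h x) x := by
  have h0 : (0:ℝ) ∈ Set.Ioo (-1:ℝ) 1 := by norm_num
  have hsub : Set.uIcc (0:ℝ) x ⊆ Set.Ioo (-1) 1 := Set.ordConnected_Ioo.uIcc_subset h0 hx
  exact intervalIntegral.integral_hasDerivAt_right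
    ((hh.mono hsub).intervalIntegrable)
    (hh.stronglyMeasurableAtFilter isOpen_Ioo x hx)
    (hh.continuousAt (isOpen_Ioo.mem_nhds hx))

lemma aux_derivPow (β : ℝ) {x : ℝ} (hx : x ∈ Set.Ioo (-1:ℝ) 1) :
    HasDerivAt (fun s : ℝ => (1 - s ^ 2) ^ β) (-2 * β * x * (1 - x ^ 2) ^ (β - 1)) x := by
  have h1 : HasDerivAt (fun s : ℝ => 1 - s ^ 2) (-(2 * x)) x := by
    simpa using ((hasDerivAt_pow 2 x).const_sub 1)
  have h2 := (Real.hasDerivAt_rpow_const (x := 1 - x ^ 2) (p := β)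
    (Or.inl (aux_pos1 hx).ne')).comp x h1
  have h3 : HasDerivAt (fun s : ℝ => (1 - s ^ 2) ^ β)
      (β * (1 - x ^ 2) ^ (β - 1) * -(2 * x)) x := h2
  convert h3 using 1
  ring

/-- Key integration by parts identity. -/
lemma aux_ibp (β c : ℝ) (f : ℝ → ℝ) (hf : ContinuousOn f (Set.Ioo (-1:ℝ) 1))
    {t : ℝ} (ht : t ∈ Set.Ioo (-1:ℝ) 1) :
    (∫ s in (0:ℝ)..t,
        (∫ u in (0:ℝ)..s, f u * (1 - u ^ 2) ^ c) * (-2 * β * s * (1 - s ^ 2) ^ (β - 1)))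
      = (∫ u in (0:ℝ)..t, f u * (1 - u ^ 2) ^ c) * (1 - t ^ 2) ^ β
        - ∫ s in (0:ℝ)..t, (f s * (1 - s ^ 2) ^ c) * (1 - s ^ 2) ^ β := by
  have h0 : (0:ℝ) ∈ Set.Ioo (-1:ℝ) 1 := by norm_num
  have hsub : Set.uIcc (0:ℝ) t ⊆ Set.Ioo (-1) 1 := Set.ordConnected_Ioo.uIcc_subset h0 ht
  have hfc : ContinuousOn (fun u => f u * (1 - u ^ 2) ^ c) (Set.Ioo (-1:ℝ) 1) :=
    hf.mul (aux_contPow c)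
  have hu : ∀ x ∈ Set.uIcc (0:ℝ) t,
      HasDerivAt (fun s => ∫ u in (0:ℝ)..s, f u * (1 - u ^ 2) ^ c)
        (f x * (1 - x ^ 2) ^ c) x :=
    fun x hx => aux_ftc _ hfc (hsub hx)
  have hv : ∀ x ∈ Set.uIcc (0:ℝ) t,
      HasDerivAt (fun s : ℝ => (1 - s ^ 2) ^ β) (-2 * β * x * (1 - x ^ 2) ^ (β - 1)) x :=
    fun x hx => aux_derivPow β (hsub hx)
  have hu' : IntervalIntegrable (fun x => f x * (1 - x ^ 2) ^ c) volume 0 t :=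
    (hfc.mono hsub).intervalIntegrable
  have hv' : IntervalIntegrable (fun x : ℝ => -2 * β * x * (1 - x ^ 2) ^ (β - 1)) volume 0 t :=
    (((continuousOn_const.mul continuousOn_id).mul (aux_contPow (β - 1))).mono
      hsub).intervalIntegrable
  have H := intervalIntegral.integral_mul_deriv_eq_deriv_mul hu hv hu' hv'
  simpa using H

/-- For `α > 0`, `Tinv α` is a two-sided inverse of `T_α` on `C(-1,1)`. -/
theorem stmt_6 (α : ℝ) (hα : 0 < α) (f g : ℝ → ℝ)
    (hf : ContinuousOn f (Set.Ioo (-1) 1)) (hg : ContinuousOn g (Set.Ioo (-1) 1)) :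
    (∀ t ∈ Set.Ioo (-1 : ℝ) 1, Tinv α (Talpha α f) t = f t) ∧
    (∀ t ∈ Set.Ioo (-1 : ℝ) 1, Talpha α (Tinv α g) t = g t) := by
  have h0 : (0:ℝ) ∈ Set.Ioo (-1:ℝ) 1 := by norm_num
  constructor
  · intro t ht
    have hsub : Set.uIcc (0:ℝ) t ⊆ Set.Ioo (-1) 1 := Set.ordConnected_Ioo.uIcc_subset h0 ht
    set c : ℝ := (α - 2) / 2 with hc
    set F : ℝ → ℝ := fun s => ∫ u in (0:ℝ)..s, f u * (1 - u ^ 2) ^ c with hF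
    have hfc : ContinuousOn (fun u => f u * (1 - u ^ 2) ^ c) (Set.Ioo (-1:ℝ) 1) :=
      hf.mul (aux_contPow c)
    have hFcont : ContinuousOn F (Set.Ioo (-1:ℝ) 1) :=
      fun x hx => ((aux_ftc _ hfc hx).continuousAt).continuousWithinAt
    -- split the integral
    have hint1 : IntervalIntegrable
        (fun s => (1 - s ^ 2) ^ (α / 2) * f s * (1 - s ^ 2) ^ (-(α + 2) / 2)) volume 0 t :=
      ((((aux_contPow (α/2)).mul hf).mul (aux_contPow (-(α+2)/2))).mono hsub).intervalIntegrable
    have hint2 : IntervalIntegrable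
        (fun s => α * s * F s * (1 - s ^ 2) ^ (-(α + 2) / 2)) volume 0 t :=
      ((((continuousOn_const.mul continuousOn_id).mul hFcont).mul
        (aux_contPow (-(α+2)/2))).mono hsub).intervalIntegrable
    have hsplit :
        (∫ s in (0:ℝ)..t, ((1 - s ^ 2) ^ (α / 2) * f s + α * s * F s)
            * (1 - s ^ 2) ^ (-(α + 2) / 2))
          = (∫ s in (0:ℝ)..t, (1 - s ^ 2) ^ (α / 2) * f s * (1 - s ^ 2) ^ (-(α + 2) / 2))
            + ∫ s in (0:ℝ)..t, α * s * F s * (1 - s ^ 2) ^ (-(α + 2) / 2) := by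
      rw [← intervalIntegral.integral_add hint1 hint2]
      congr 1; ext s; ring
    -- the IBP term, with β = -α/2
    have hibp := aux_ibp (-α/2) c f hf ht
    have hibp' :
        (∫ s in (0:ℝ)..t, α * s * F s * (1 - s ^ 2) ^ (-(α + 2) / 2))
          = F t * (1 - t ^ 2) ^ (-α/2)
            - ∫ s in (0:ℝ)..t, (f s * (1 - s ^ 2) ^ c) * (1 - s ^ 2) ^ (-α/2) := by
      rw [← hibp]
      congr 1; ext s
      have hexp : (-(α + 2) / 2 : ℝ) = -α/2 - 1 := by ring
      rw [hexp]; ring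
    -- the two "f" integrals agree
    have hcongr :
        (∫ s in (0:ℝ)..t, (1 - s ^ 2) ^ (α / 2) * f s * (1 - s ^ 2) ^ (-(α + 2) / 2))
          = ∫ s in (0:ℝ)..t, (f s * (1 - s ^ 2) ^ c) * (1 - s ^ 2) ^ (-α/2) := by
      apply intervalIntegral.integral_congr
      intro s hs
      have hp : (0:ℝ) < 1 - s ^ 2 := aux_pos1 (hsub hs)
      have e1 : (1 - s ^ 2) ^ (α / 2) * (1 - s ^ 2) ^ (-(α + 2) / 2)
          = (1 - s ^ 2) ^ c * (1 - s ^ 2) ^ (-α/2) := by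
        rw [← Real.rpow_add hp, ← Real.rpow_add hp]
        congr 1; rw [hc]; ring
      calc (1 - s ^ 2) ^ (α / 2) * f s * (1 - s ^ 2) ^ (-(α + 2) / 2)
          = f s * ((1 - s ^ 2) ^ (α / 2) * (1 - s ^ 2) ^ (-(α + 2) / 2)) := by ring
        _ = f s * ((1 - s ^ 2) ^ c * (1 - s ^ 2) ^ (-α/2)) := by rw [e1]
        _ = (f s * (1 - s ^ 2) ^ c) * (1 - s ^ 2) ^ (-α/2) := by ring
    have hpt : (0:ℝ) < 1 - t ^ 2 := aux_pos1 ht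
    have hone : (1 - t ^ 2) ^ (-α / 2) * (1 - t ^ 2) ^ (α / 2) = 1 := by
      rw [← Real.rpow_add hpt]
      have h' : -α / 2 + α / 2 = 0 := by ring
      rw [h', Real.rpow_zero]
    simp only [Tinv, Talpha, ← hc, ← hF]
    rw [hsplit, hibp', hcongr]
    have : (1 - t ^ 2) ^ (-α / 2) * ((1 - t ^ 2) ^ (α / 2) * f t + α * t * F t)
        = f t + α * t * (F t * (1 - t ^ 2) ^ (-α/2)) := by
      rw [mul_add, ← mul_assoc, hone]; ring
    rw [this]; ring
  · intro t ht
    have hsub : Set.uIcc (0:ℝ) t ⊆ Set.Ioo (-1) 1 := Set.ordConnected_Ioo.uIcc_subset h0 ht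
    set c : ℝ := -(α + 2) / 2 with hc
    set G : ℝ → ℝ := fun s => ∫ u in (0:ℝ)..s, g u * (1 - u ^ 2) ^ c with hG
    have hgc : ContinuousOn (fun u => g u * (1 - u ^ 2) ^ c) (Set.Ioo (-1:ℝ) 1) :=
      hg.mul (aux_contPow c)
    have hGcont : ContinuousOn G (Set.Ioo (-1:ℝ) 1) :=
      fun x hx => ((aux_ftc _ hgc hx).continuousAt).continuousWithinAt
    have hint1 : IntervalIntegrable
        (fun s => (1 - s ^ 2) ^ (-α / 2) * g s * (1 - s ^ 2) ^ ((α - 2) / 2)) volume 0 t :=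
      ((((aux_contPow (-α/2)).mul hg).mul (aux_contPow ((α-2)/2))).mono hsub).intervalIntegrable
    have hint2 : IntervalIntegrable
        (fun s => α * s * G s * (1 - s ^ 2) ^ ((α - 2) / 2)) volume 0 t :=
      ((((continuousOn_const.mul continuousOn_id).mul hGcont).mul
        (aux_contPow ((α-2)/2))).mono hsub).intervalIntegrable
    have hsplit :
        (∫ s in (0:ℝ)..t, ((1 - s ^ 2) ^ (-α / 2) * g s - α * s * G s)
            * (1 - s ^ 2) ^ ((α - 2) / 2))
          = (∫ s in (0:ℝ)..t, (1 - s ^ 2) ^ (-α / 2) * g s * (1 - s ^ 2) ^ ((α - 2) / 2))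
            - ∫ s in (0:ℝ)..t, α * s * G s * (1 - s ^ 2) ^ ((α - 2) / 2) := by
      rw [← intervalIntegral.integral_sub hint1 hint2]
      congr 1; ext s; ring
    have hibp := aux_ibp (α/2) c g hg ht
    have hibp' :
        (∫ s in (0:ℝ)..t, α * s * G s * (1 - s ^ 2) ^ ((α - 2) / 2))
          = -(G t * (1 - t ^ 2) ^ (α/2)
              - ∫ s in (0:ℝ)..t, (g s * (1 - s ^ 2) ^ c) * (1 - s ^ 2) ^ (α/2)) := by
      rw [← hibp, ← intervalIntegral.integral_neg]
      congr 1; ext s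
      have hexp : ((α - 2) / 2 : ℝ) = α/2 - 1 := by ring
      rw [hexp]; ring
    have hcongr :
        (∫ s in (0:ℝ)..t, (1 - s ^ 2) ^ (-α / 2) * g s * (1 - s ^ 2) ^ ((α - 2) / 2))
          = ∫ s in (0:ℝ)..t, (g s * (1 - s ^ 2) ^ c) * (1 - s ^ 2) ^ (α/2) := by
      apply intervalIntegral.integral_congr
      intro s hs
      have hp : (0:ℝ) < 1 - s ^ 2 := aux_pos1 (hsub hs)
      have e1 : (1 - s ^ 2) ^ (-α / 2) * (1 - s ^ 2) ^ ((α - 2) / 2)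
          = (1 - s ^ 2) ^ c * (1 - s ^ 2) ^ (α/2) := by
        rw [← Real.rpow_add hp, ← Real.rpow_add hp]
        congr 1; rw [hc]; ring
      calc (1 - s ^ 2) ^ (-α / 2) * g s * (1 - s ^ 2) ^ ((α - 2) / 2)
          = g s * ((1 - s ^ 2) ^ (-α / 2) * (1 - s ^ 2) ^ ((α - 2) / 2)) := by ring
        _ = g s * ((1 - s ^ 2) ^ c * (1 - s ^ 2) ^ (α/2)) := by rw [e1]
        _ = (g s * (1 - s ^ 2) ^ c) * (1 - s ^ 2) ^ (α/2) := by ring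
    have hpt : (0:ℝ) < 1 - t ^ 2 := aux_pos1 ht
    have hone : (1 - t ^ 2) ^ (α / 2) * (1 - t ^ 2) ^ (-α / 2) = 1 := by
      rw [← Real.rpow_add hpt]
      have h' : α / 2 + -α / 2 = 0 := by ring
      rw [h', Real.rpow_zero]
    simp only [Talpha, Tinv, ← hc, ← hG]
    rw [hsplit, hibp', hcongr]
    have : (1 - t ^ 2) ^ (α / 2) * ((1 - t ^ 2) ^ (-α / 2) * g t - α * t * G t)
        = g t - α * t * (G t * (1 - t ^ 2) ^ (α/2)) := by
      rw [mul_sub, ← mul_assoc, hone]; ring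
    rw [this]; ring
end

section
/- For α > 0, the transform T_α is a bijection from the class D^α onto C[-1,1]. -/
def MemD (α : ℝ) (f : ℝ → ℝ) : Prop :=
  ContinuousOn f (Set.Ioo (-1) 1) ∧
  Filter.Tendsto (fun s => f s * (1 - s ^ 2) ^ (α / 2)) (nhdsWithin 1 (Set.Iio 1)) (nhds 0) ∧
  Filter.Tendsto (fun s => f s * (1 - s ^ 2) ^ (α / 2))
    (nhdsWithin (-1) (Set.Ioi (-1))) (nhds 0) ∧
  (∃ L : ℝ, Filter.Tendsto (fun s => ∫ t in (0 : ℝ)..s, f t * (1 - t ^ 2) ^ ((α - 2) / 2))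
    (nhdsWithin 1 (Set.Iio 1)) (nhds L)) ∧
  (∃ L : ℝ, Filter.Tendsto (fun s => ∫ t in (0 : ℝ)..s, f t * (1 - t ^ 2) ^ ((α - 2) / 2))
    (nhdsWithin (-1) (Set.Ioi (-1))) (nhds L))

open Set Filter MeasureTheory intervalIntegral Real

lemma opos {t : ℝ} (ht : t ∈ Set.Ioo (-1:ℝ) 1) : 0 < 1 - t^2 := by
  nlinarith [ht.1, ht.2]

lemma contOn_rpow (β : ℝ) : ContinuousOn (fun t : ℝ => (1 - t^2) ^ β) (Set.Ioo (-1:ℝ) 1) := by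
  apply ContinuousOn.rpow_const
  · fun_prop
  · intro t ht; exact Or.inl (ne_of_gt (opos ht))

lemma integrand_contOn {f : ℝ → ℝ} (hf : ContinuousOn f (Set.Ioo (-1:ℝ) 1)) (β : ℝ) :
    ContinuousOn (fun t => f t * (1 - t^2)^β) (Set.Ioo (-1:ℝ) 1) :=
  hf.mul (contOn_rpow β)

lemma uIcc_sub {s : ℝ} (hs : s ∈ Set.Ioo (-1:ℝ) 1) : Set.uIcc (0:ℝ) s ⊆ Set.Ioo (-1:ℝ) 1 := by
  intro t ht
  rcases Set.mem_uIcc.mp ht with ⟨h1, h2⟩ | ⟨h1, h2⟩ <;>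
    exact ⟨by linarith [hs.1, hs.2], by linarith [hs.1, hs.2]⟩

lemma hasDerivAt_int {h : ℝ → ℝ}
    (hf : ContinuousOn h (Set.Ioo (-1:ℝ) 1)) {s : ℝ}
    (hs : s ∈ Set.Ioo (-1:ℝ) 1) :
    HasDerivAt (fun u => ∫ t in (0:ℝ)..u, h t) (h s) s := by
  apply intervalIntegral.integral_hasDerivAt_right
  · exact (hf.mono (uIcc_sub hs)).intervalIntegrable
  · exact (hf.stronglyMeasurableAtFilter isOpen_Ioo) s hs
  · exact hf.continuousAt (isOpen_Ioo.mem_nhds hs)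

lemma const_of_deriv_zero {G : ℝ → ℝ} (h : ∀ s ∈ Set.Ioo (-1:ℝ) 1, HasDerivAt G 0 s)
    {x y : ℝ} (hx : x ∈ Set.Ioo (-1:ℝ) 1) (hy : y ∈ Set.Ioo (-1:ℝ) 1) : G x = G y := by
  apply (convex_Ioo (-1:ℝ) 1).is_const_of_fderivWithin_eq_zero
    (fun s hs => ((h s hs).differentiableAt).differentiableWithinAt) _ hx hy
  intro s hs
  rw [fderivWithin_of_isOpen isOpen_Ioo hs, (h s hs).hasFDerivAt.fderiv]
  ext u
  simp

lemma hasDerivAt_base {s p : ℝ} (hs : s ∈ Set.Ioo (-1:ℝ) 1) :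
    HasDerivAt (fun u : ℝ => (1 - u^2) ^ p) (-(2*s) * p * (1 - s^2) ^ (p-1)) s := by
  have h1 : HasDerivAt (fun u : ℝ => 1 - u^2) (-(2*s)) s := by
    simpa using ((hasDerivAt_pow 2 s).const_sub 1)
  have := HasDerivAt.rpow_const (p := p) h1 (Or.inl (opos hs).ne')
  convert this using 1
  try ring

lemma part1 (α : ℝ) (hα : 0 < α) (f₁ f₂ : ℝ → ℝ)
    (h₁ : ContinuousOn f₁ (Set.Ioo (-1:ℝ) 1)) (h₂ : ContinuousOn f₂ (Set.Ioo (-1:ℝ) 1))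
    (heq : ∀ t ∈ Set.Ioo (-1 : ℝ) 1, Talpha α f₁ t = Talpha α f₂ t) :
    ∀ t ∈ Set.Ioo (-1 : ℝ) 1, f₁ t = f₂ t := by
  set F₁ : ℝ → ℝ := fun s => ∫ t in (0:ℝ)..s, f₁ t * (1 - t^2)^((α-2)/2) with hF₁def
  set F₂ : ℝ → ℝ := fun s => ∫ t in (0:ℝ)..s, f₂ t * (1 - t^2)^((α-2)/2) with hF₂def
  have hd₁ : ∀ s ∈ Set.Ioo (-1:ℝ) 1, HasDerivAt F₁ (f₁ s * (1 - s^2)^((α-2)/2)) s :=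
    fun s hs => hasDerivAt_int (integrand_contOn h₁ _) hs
  have hd₂ : ∀ s ∈ Set.Ioo (-1:ℝ) 1, HasDerivAt F₂ (f₂ s * (1 - s^2)^((α-2)/2)) s :=
    fun s hs => hasDerivAt_int (integrand_contOn h₂ _) hs
  -- the auxiliary function
  set G : ℝ → ℝ := fun s => (F₁ s - F₂ s) * (1 - s^2) ^ (-(α/2)) with hGdef
  have hG0 : ∀ s ∈ Set.Ioo (-1:ℝ) 1, HasDerivAt G 0 s := by
    intro s hs
    have hb := opos hs
    have hder := (((hd₁ s hs).sub (hd₂ s hs)).mul (hasDerivAt_base (p := -(α/2)) hs))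
    convert hder using 1
    case e'_4 => rfl
    case e'_5 => rfl
    case e'_8 => rfl
    have E : (1 - s^2)^(α/2) * f₁ s + α * s * F₁ s
        = (1 - s^2)^(α/2) * f₂ s + α * s * F₂ s := heq s hs
    have e1 : (1 - s^2)^((α-2)/2) * (1 - s^2)^(-(α/2)) = (1 - s^2)^(α/2) * (1 - s^2)^(-(α/2)-1) := by
      rw [← Real.rpow_add hb, ← Real.rpow_add hb]; ring_nf
    have e2 : (1 - s^2)^(-(α/2)-1) = (1 - s^2)^(-(α/2)-1) := rfl
    have e3 : -(2*s) * (-(α/2)) * (1 - s^2)^(-(α/2)-1) = α * s * (1 - s^2)^(-(α/2)-1) := by ring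
    rw [e3, Pi.sub_apply]
    linear_combination (f₂ s - f₁ s) * e1 - (1 - s^2)^(-(α/2)-1) * E
  have hzero : (0:ℝ) ∈ Set.Ioo (-1:ℝ) 1 := by norm_num
  have hkey : ∀ s ∈ Set.Ioo (-1:ℝ) 1, F₁ s = F₂ s := by
    intro s hs
    have := const_of_deriv_zero hG0 hs hzero
    have hG0' : G 0 = 0 := by simp [hGdef, hF₁def, hF₂def]
    rw [hG0'] at this
    have hbne : (1 - s^2 : ℝ) ^ (-(α/2)) ≠ 0 := (Real.rpow_pos_of_pos (opos hs) _).ne'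
    have := mul_eq_zero.mp this
    rcases this with h | h
    · linarith [sub_eq_zero.mp h]
    · exact absurd h hbne
  intro t ht
  have hF₂' : HasDerivAt F₁ (f₂ t * (1 - t^2)^((α-2)/2)) t := by
    apply (hd₂ t ht).congr_of_eventuallyEq
    filter_upwards [isOpen_Ioo.mem_nhds ht] with x hx
    exact hkey x hx
  have huniq := (hd₁ t ht).unique hF₂'
  have hbpos : (0:ℝ) < (1 - t^2)^((α-2)/2) := Real.rpow_pos_of_pos (opos ht) _
  exact mul_right_cancel₀ hbpos.ne' huniq

lemma contOn_T (α : ℝ) (f : ℝ → ℝ) (hc : ContinuousOn f (Set.Ioo (-1:ℝ) 1)) :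
    ContinuousOn (Talpha α f) (Set.Ioo (-1:ℝ) 1) := by
  have hFc : ContinuousOn (fun s => ∫ t in (0:ℝ)..s, f t * (1 - t^2)^((α-2)/2))
      (Set.Ioo (-1:ℝ) 1) :=
    fun s hs => ((hasDerivAt_int (integrand_contOn hc _) hs).continuousAt).continuousWithinAt
  unfold Talpha
  exact ((contOn_rpow _).mul hc).add ((continuousOn_const.mul continuousOn_id).mul hFc)

lemma part2 (α : ℝ) (hα : 0 < α) (f : ℝ → ℝ) (hf : MemD α f) :
    ∃ g : ℝ → ℝ, ContinuousOn g (Set.Icc (-1) 1) ∧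
      ∀ t ∈ Set.Ioo (-1 : ℝ) 1, Talpha α f t = g t := by
  obtain ⟨hc, hlim1, hlim2, ⟨L₁, hL₁⟩, ⟨L₂, hL₂⟩⟩ := hf
  set T := Talpha α f with hT
  set g : ℝ → ℝ := fun s => if s = 1 then α * L₁ else if s = -1 then -(α * L₂) else T s with hg
  have hgIoo : ∀ x ∈ Set.Ioo (-1:ℝ) 1, g x = T x := by
    intro x hx
    have : x ≠ 1 := ne_of_lt hx.2
    have h2 : x ≠ -1 := ne_of_gt hx.1
    simp [hg, this, h2]
  have hTc := contOn_T α f hc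
  -- limit at 1 from the left
  have ht1 : Filter.Tendsto T (nhdsWithin 1 (Set.Iio 1)) (nhds (α * L₁)) := by
    have h1 : Filter.Tendsto (fun s : ℝ => (1 - s^2)^(α/2) * f s)
        (nhdsWithin 1 (Set.Iio 1)) (nhds 0) := by
      apply hlim1.congr; intro s; ring
    have h2 : Filter.Tendsto (fun s : ℝ => α * s) (nhdsWithin 1 (Set.Iio 1)) (nhds (α * 1)) :=
      ((continuous_const.mul continuous_id).tendsto 1).mono_left nhdsWithin_le_nhds
    have := h1.add ((h2.mul hL₁))
    rw [zero_add, mul_one] at this; exact this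
  -- limit at -1 from the right
  have ht2 : Filter.Tendsto T (nhdsWithin (-1) (Set.Ioi (-1))) (nhds (-(α * L₂))) := by
    have h1 : Filter.Tendsto (fun s : ℝ => (1 - s^2)^(α/2) * f s)
        (nhdsWithin (-1) (Set.Ioi (-1))) (nhds 0) := by
      apply hlim2.congr; intro s; ring
    have h2 : Filter.Tendsto (fun s : ℝ => α * s)
        (nhdsWithin (-1) (Set.Ioi (-1))) (nhds (α * (-1))) :=
      ((continuous_const.mul continuous_id).tendsto (-1)).mono_left nhdsWithin_le_nhds
    have := h1.add ((h2.mul hL₂))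
    have he : 0 + α * (-1) * L₂ = -(α * L₂) := by ring
    rw [he] at this
    exact this
  refine ⟨g, ?_, fun t ht => (hgIoo t ht).symm⟩
  intro s hs
  rcases eq_or_ne s 1 with rfl | hs1
  · rw [← continuousWithinAt_diff_self]
    have hmono : nhdsWithin (1:ℝ) (Set.Icc (-1) 1 \ {1}) ≤ nhdsWithin 1 (Set.Iio 1) := by
      apply nhdsWithin_mono
      rintro x ⟨hx1, hx2⟩
      exact lt_of_le_of_ne hx1.2 (by simpa using hx2)
    have hg1 : g 1 = α * L₁ := by simp [hg]
    rw [ContinuousWithinAt, hg1]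
    apply (ht1.mono_left hmono).congr'
    filter_upwards [self_mem_nhdsWithin,
      nhdsWithin_le_nhds (eventually_gt_nhds (show (-1:ℝ) < 1 by norm_num))] with x hx hx'
    exact (hgIoo x ⟨hx', lt_of_le_of_ne hx.1.2 (by simpa using hx.2)⟩).symm
  rcases eq_or_ne s (-1) with rfl | hs2
  · rw [← continuousWithinAt_diff_self]
    have hmono : nhdsWithin (-1:ℝ) (Set.Icc (-1) 1 \ {-1}) ≤ nhdsWithin (-1) (Set.Ioi (-1)) := by
      apply nhdsWithin_mono
      rintro x ⟨hx1, hx2⟩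
      exact lt_of_le_of_ne hx1.1 (by simpa using fun h => hx2 h.symm)
    have hg1 : g (-1) = -(α * L₂) := by norm_num [hg]
    rw [ContinuousWithinAt, hg1]
    apply (ht2.mono_left hmono).congr'
    filter_upwards [self_mem_nhdsWithin,
      nhdsWithin_le_nhds (eventually_lt_nhds (show (-1:ℝ) < 1 by norm_num))] with x hx hx'
    exact (hgIoo x ⟨lt_of_le_of_ne hx.1.1 (by simpa using fun h => hx.2 h.symm), hx'⟩).symm
  · have hsIoo : s ∈ Set.Ioo (-1:ℝ) 1 :=
      ⟨lt_of_le_of_ne hs.1 (Ne.symm hs2), lt_of_le_of_ne hs.2 hs1⟩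
    apply ContinuousAt.continuousWithinAt
    apply (hTc.continuousAt (isOpen_Ioo.mem_nhds hsIoo)).congr
    filter_upwards [isOpen_Ioo.mem_nhds hsIoo] with x hx
    exact (hgIoo x hx).symm

lemma uIcc_sub' {a b : ℝ} (ha : a ∈ Set.Ioo (-1:ℝ) 1) (hb : b ∈ Set.Ioo (-1:ℝ) 1) :
    Set.uIcc a b ⊆ Set.Ioo (-1:ℝ) 1 := by
  intro t ht
  rcases Set.mem_uIcc.mp ht with ⟨h1, h2⟩ | ⟨h1, h2⟩ <;>
    exact ⟨by linarith [ha.1, ha.2, hb.1, hb.2], by linarith [ha.1, ha.2, hb.1, hb.2]⟩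

lemma intInt {h : ℝ → ℝ} (hc : ContinuousOn h (Set.Ioo (-1:ℝ) 1)) {a b : ℝ}
    (ha : a ∈ Set.Ioo (-1:ℝ) 1) (hb : b ∈ Set.Ioo (-1:ℝ) 1) :
    IntervalIntegrable h MeasureTheory.volume a b :=
  (hc.mono (uIcc_sub' ha hb)).intervalIntegrable

set_option maxHeartbeats 2000000 in

set_option maxHeartbeats 2000000 in
lemma key_limit (α : ℝ) (hα : 0 < α) (g : ℝ → ℝ) (hg : ContinuousOn g (Set.Icc (-1:ℝ) 1)) :
    Filter.Tendsto (fun s => (1 - s^2)^(α/2) * ∫ t in (0:ℝ)..s, g t * (1 - t^2)^(-(α/2)-1))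
      (nhdsWithin 1 (Set.Iio 1)) (nhds (g 1 / α)) := by
  set c := g 1 with hc
  set w : ℝ → ℝ := fun t => (1 - t^2)^(-(α/2)-1) with hw
  have hwc : ContinuousOn w (Set.Ioo (-1:ℝ) 1) := contOn_rpow _
  have htwc : ContinuousOn (fun t => t * w t) (Set.Ioo (-1:ℝ) 1) := continuousOn_id.mul hwc
  have hgw : ContinuousOn (fun t => g t * w t) (Set.Ioo (-1:ℝ) 1) :=
    (hg.mono Set.Ioo_subset_Icc_self).mul hwc
  rw [Metric.tendsto_nhds]
  intro ε hε
  have hgc1 : ContinuousWithinAt g (Set.Icc (-1:ℝ) 1) 1 := hg 1 (by norm_num)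
  set ε' := α * ε / 8 with hε'def
  have hε'pos : 0 < ε' := by positivity
  obtain ⟨δ, hδpos, hδ⟩ := Metric.continuousWithinAt_iff.mp hgc1 ε' hε'pos
  set η := min (δ/2) (min (1/2 : ℝ) (α * ε / (8 * (|c| + 1)))) with hηdef
  have hcabs : (0:ℝ) < |c| + 1 := by positivity
  have hηpos : 0 < η := lt_min (by positivity) (lt_min (by norm_num) (by positivity))
  have hηδ : η ≤ δ/2 := min_le_left _ _
  have hη2 : η ≤ 1/2 := le_trans (min_le_right _ _) (min_le_left _ _)
  have hηε : η ≤ α * ε / (8 * (|c| + 1)) := le_trans (min_le_right _ _) (min_le_right _ _)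
  set s₀ := 1 - η with hs₀def
  have hs₀half : (1/2:ℝ) ≤ s₀ := by rw [hs₀def]; linarith
  have hs₀lt1 : s₀ < 1 := by rw [hs₀def]; linarith
  have hs₀mem : s₀ ∈ Set.Ioo (-1:ℝ) 1 := ⟨by linarith, hs₀lt1⟩
  have h0mem : (0:ℝ) ∈ Set.Ioo (-1:ℝ) 1 := by norm_num
  set I₀ := ∫ t in (0:ℝ)..s₀, g t * w t with hI₀
  set C₀ := (1 - s₀^2)^(-(α/2)) with hC₀
  have hC₀pos : 0 < C₀ := Real.rpow_pos_of_pos (opos hs₀mem) _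
  -- (1-s²)^{α/2} → 0
  have hP0 : Filter.Tendsto (fun s : ℝ => (1 - s^2)^(α/2)) (nhdsWithin 1 (Set.Iio 1)) (nhds 0) := by
    have h1 : Filter.Tendsto (fun s : ℝ => 1 - s^2) (nhdsWithin 1 (Set.Iio 1)) (nhds 0) := by
      have hco : Continuous fun s : ℝ => 1 - s^2 := by continuity
      have := (hco.tendsto 1).mono_left (nhdsWithin_le_nhds (s := Set.Iio 1))
      simpa using this
    have h2 : Filter.Tendsto (fun x : ℝ => x ^ (α/2)) (nhds 0) (nhds 0) := by
      have h3 := (Real.continuousAt_rpow_const 0 (α/2) (Or.inr (by positivity))).tendsto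
      simpa [Real.zero_rpow (by positivity : (0:ℝ) < α/2).ne'] using h3
    exact h2.comp h1
  have hA : ∀ᶠ s in nhdsWithin 1 (Set.Iio 1), (1 - s^2)^(α/2) * |I₀| < ε/8 := by
    have := hP0.mul_const |I₀|
    rw [zero_mul] at this
    exact this.eventually_lt_const (by positivity)
  have hr : ∀ᶠ s in nhdsWithin 1 (Set.Iio 1), |c| * ((1 - s^2)^(α/2) * C₀) / α < ε/8 := by
    have h1 := ((hP0.mul_const C₀).const_mul |c|).div_const α
    have h2 : |c| * (0 * C₀) / α = 0 := by ring
    rw [h2] at h1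
    exact h1.eventually_lt_const (by positivity)
  filter_upwards [self_mem_nhdsWithin,
    nhdsWithin_le_nhds (eventually_gt_nhds hs₀lt1), hA, hr] with s hsIio hs₀s hAs hrs
  have hsIio' : s < 1 := hsIio
  have hsmem : s ∈ Set.Ioo (-1:ℝ) 1 := ⟨by linarith, hsIio'⟩
  have hb := opos hsmem
  have hPpos : (0:ℝ) < (1 - s^2)^(α/2) := Real.rpow_pos_of_pos hb _
  have hle : s₀ ≤ s := le_of_lt hs₀s
  have hIccsub : Set.Icc s₀ s ⊆ Set.Ioo (-1:ℝ) 1 := fun t ht =>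
    ⟨by linarith [ht.1], lt_of_le_of_lt ht.2 hsIio'⟩
  have hsplit : (∫ t in (0:ℝ)..s, g t * w t) = I₀ + ∫ t in s₀..s, g t * w t :=
    (intervalIntegral.integral_add_adjacent_intervals
      (intInt hgw h0mem hs₀mem) (intInt hgw hs₀mem hsmem)).symm
  set K := ∫ t in s₀..s, w t with hK
  set Kw := ∫ t in s₀..s, t * w t with hKw
  have hwpos : ∀ t ∈ Set.Icc s₀ s, 0 < w t := fun t ht =>
    Real.rpow_pos_of_pos (opos (hIccsub ht)) _
  have hKwval : Kw = (1/α) * ((1 - s^2)^(-(α/2)) - C₀) := by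
    rw [hKw]
    have hD : ∀ u ∈ Set.uIcc s₀ s,
        HasDerivAt (fun u => (1/α) * (1 - u^2)^(-(α/2))) (u * w u) u := by
      intro u hu
      have hu' : u ∈ Set.Ioo (-1:ℝ) 1 := hIccsub (by rwa [Set.uIcc_of_le hle] at hu)
      have h2 := (hasDerivAt_base (p := -(α/2)) hu').const_mul (1/α)
      convert h2 using 1
      case e'_4 => rfl
      case e'_5 => rfl
      rw [hw]
      have : -(α/2) - 1 = -(α/2) - 1 := rfl
      field_simp
    rw [intervalIntegral.integral_eq_sub_of_hasDerivAt hD (intInt htwc hs₀mem hsmem)]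
    rw [hC₀]
    ring
  have hKnonneg : 0 ≤ K := intervalIntegral.integral_nonneg hle (fun u hu => (hwpos u hu).le)
  have hKwK : Kw ≤ K := by
    apply intervalIntegral.integral_mono_on hle (intInt htwc hs₀mem hsmem)
      (intInt hwc hs₀mem hsmem)
    intro t ht
    have ht1 : t ≤ 1 := le_trans ht.2 hsIio'.le
    have h0 : 0 ≤ (1 - t) * w t := mul_nonneg (by linarith) (hwpos t ht).le
    nlinarith [h0]
  have hKKw : s₀ * K ≤ Kw := by
    have h1 := intervalIntegral.integral_mono_on (f := fun t => s₀ * w t) hle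
      ((intInt hwc hs₀mem hsmem).const_mul s₀) (intInt htwc hs₀mem hsmem)
      (fun t ht => mul_le_mul_of_nonneg_right ht.1 (hwpos t ht).le)
    simpa [intervalIntegral.integral_const_mul, hK] using h1
  have hgwK : |(∫ t in s₀..s, g t * w t) - c * K| ≤ ε' * K := by
    have h1 : (∫ t in s₀..s, g t * w t) - c * K = ∫ t in s₀..s, (g t - c) * w t := by
      rw [hK, ← intervalIntegral.integral_const_mul,
        ← intervalIntegral.integral_sub (intInt hgw hs₀mem hsmem)
          ((intInt hwc hs₀mem hsmem).const_mul c)]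
      congr 1
      ext t
      ring
    rw [h1]
    calc |∫ t in s₀..s, (g t - c) * w t| ≤ ∫ t in s₀..s, |(g t - c) * w t| :=
          intervalIntegral.abs_integral_le_integral_abs hle
      _ ≤ ∫ t in s₀..s, ε' * w t := by
          simp only [sub_mul]
          apply intervalIntegral.integral_mono_on hle
            ((intInt hgw hs₀mem hsmem).sub ((intInt hwc hs₀mem hsmem).const_mul c)
              |>.abs)
            ((intInt hwc hs₀mem hsmem).const_mul ε')
          intro t ht
          have hticc : t ∈ Set.Icc (-1:ℝ) 1 := ⟨by linarith [ht.1], le_trans ht.2 hsIio'.le⟩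
          have hdist : dist t 1 < δ := by
            rw [Real.dist_eq, abs_of_nonpos (by linarith [ht.2] : t - 1 ≤ 0)]
            have : s₀ ≤ t := ht.1
            rw [hs₀def] at this
            linarith
          have hgt := (hδ hticc hdist).le
          rw [Real.dist_eq] at hgt
          rw [← sub_mul, abs_mul, abs_of_pos (hwpos t ht)]
          exact mul_le_mul_of_nonneg_right hgt (hwpos t ht).le
      _ = ε' * K := by rw [intervalIntegral.integral_const_mul, hK]
  -- assemble
  have hPP : (1 - s^2)^(α/2) * (1 - s^2)^(-(α/2)) = 1 := by
    rw [← Real.rpow_add hb]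
    simp
  set P := (1 - s^2)^(α/2) with hPdef
  have hPKw : P * Kw = (1 - P * C₀)/α := by
    rw [hKwval]
    calc P * ((1/α) * ((1 - s^2)^(-(α/2)) - C₀))
        = (1/α) * (P * (1 - s^2)^(-(α/2)) - P * C₀) := by ring
      _ = (1/α) * (1 - P*C₀) := by rw [hPP]
      _ = (1 - P*C₀)/α := by ring
  have hrpos : 0 < P * C₀ := mul_pos hPpos hC₀pos
  have hs₀pos : (0:ℝ) < s₀ := by linarith
  have hPKlow : (1 - P * C₀)/α ≤ P * K := by
    rw [← hPKw]
    exact mul_le_mul_of_nonneg_left hKwK hPpos.le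
  have hPKhigh : P * K ≤ (1 - P * C₀)/(α * s₀) := by
    have h1 : P * (s₀ * K) ≤ P * Kw := mul_le_mul_of_nonneg_left hKKw hPpos.le
    rw [hPKw] at h1
    rw [le_div_iff₀ (by positivity : (0:ℝ) < α * s₀)]
    calc P * K * (α * s₀) = (P * (s₀ * K)) * α := by ring
      _ ≤ ((1 - P*C₀)/α) * α := mul_le_mul_of_nonneg_right h1 hα.le
      _ = 1 - P*C₀ := by field_simp
  have hfrac0 : (0:ℝ) ≤ 1/s₀ - 1 := by
    rw [sub_nonneg, le_div_iff₀ hs₀pos]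
    linarith
  have habsPK : |P * K - 1/α| ≤ P*C₀/α + (1/s₀ - 1)/α := by
    rw [abs_le]
    constructor
    · have h2 : (0:ℝ) ≤ (1/s₀ - 1)/α := by positivity
      have h3 : (1 - P*C₀)/α = 1/α - P*C₀/α := by ring
      rw [h3] at hPKlow
      linarith
    · have h3 : (1 - P*C₀)/(α*s₀) ≤ 1/(α*s₀) := by
        have hd : (0:ℝ) < α*s₀ := by positivity
        exact (div_le_div_iff_of_pos_right hd).mpr (by linarith [hrpos])
      have h4 : 1/(α*s₀) - 1/α = (1/s₀ - 1)/α := by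
        field_simp
      have h5 : (0:ℝ) ≤ P*C₀/α := by positivity
      linarith
  rw [Real.dist_eq]
  have hdecomp : P * (∫ t in (0:ℝ)..s, g t * w t) - c/α
      = P * I₀ + P * ((∫ t in s₀..s, g t * w t) - c*K) + c * (P*K - 1/α) := by
    rw [hsplit]
    ring
  rw [hdecomp]
  have e1 : |P * I₀| = P * |I₀| := by rw [abs_mul, abs_of_pos hPpos]
  have e2 : |P * ((∫ t in s₀..s, g t * w t) - c*K)| ≤ P * (ε' * K) := by
    rw [abs_mul, abs_of_pos hPpos]
    exact mul_le_mul_of_nonneg_left hgwK hPpos.le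
  have e3 : |c * (P*K - 1/α)| ≤ |c| * (P*C₀/α + (1/s₀-1)/α) := by
    rw [abs_mul]
    exact mul_le_mul_of_nonneg_left habsPK (abs_nonneg c)
  have e4 : P * (ε' * K) ≤ ε/4 := by
    have h6 : (1 - P*C₀)/(α*s₀) ≤ 2/α := by
      rw [div_le_div_iff₀ (by positivity) hα]
      have h61 : (1:ℝ) ≤ 2*s₀ := by linarith
      have h62 : (1 - P*C₀) ≤ 1 := by linarith
      calc (1-P*C₀)*α ≤ 1*α := mul_le_mul_of_nonneg_right h62 hα.le
        _ = α*1 := by ring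
        _ ≤ α*(2*s₀) := mul_le_mul_of_nonneg_left h61 hα.le
        _ = 2*(α*s₀) := by ring
    have h5 : P * K ≤ 2/α := le_trans hPKhigh h6
    calc P * (ε' * K) = ε' * (P * K) := by ring
      _ ≤ ε' * (2/α) := mul_le_mul_of_nonneg_left h5 hε'pos.le
      _ = ε/4 := by rw [hε'def]; field_simp; ring
  have e5 : |c| * ((1/s₀-1)/α) ≤ ε/4 := by
    have h7 : 1/s₀ - 1 ≤ 2*η := by
      rw [div_sub_one hs₀pos.ne', div_le_iff₀ hs₀pos]
      have h70 : 1 - s₀ = η := by rw [hs₀def]; ring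
      have h71 : η * (1/2) ≤ η * s₀ := mul_le_mul_of_nonneg_left hs₀half hηpos.le
      rw [h70]
      calc η = 2 * (η * (1/2)) := by ring
        _ ≤ 2 * (η * s₀) := by linarith
        _ = 2*η*s₀ := by ring
    have h8 : |c| * (1/s₀ - 1) ≤ |c| * (2*η) := mul_le_mul_of_nonneg_left h7 (abs_nonneg c)
    have h9 : |c| * (2*η) ≤ |c| * (2 * (α*ε/(8*(|c|+1)))) := by
      apply mul_le_mul_of_nonneg_left _ (abs_nonneg c)
      linarith
    have h10 : |c| * (2 * (α*ε/(8*(|c|+1)))) = (|c|/(|c|+1)) * (α*ε/4) := by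
      field_simp
      ring
    have h11 : (|c|/(|c|+1)) * (α*ε/4) ≤ α*ε/4 := by
      have h111 : |c|/(|c|+1) ≤ 1 := by
        rw [div_le_one hcabs]
        linarith
      have h110 : (0:ℝ) ≤ α*ε/4 := by positivity
      calc (|c|/(|c|+1))*(α*ε/4) ≤ 1*(α*ε/4) := mul_le_mul_of_nonneg_right h111 h110
        _ = α*ε/4 := one_mul _
    have h12 : |c| * (1/s₀-1) ≤ α*ε/4 := by
      rw [h10] at h9
      linarith
    calc |c| * ((1/s₀-1)/α) = (|c| * (1/s₀-1))/α := by ring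
      _ ≤ (α*ε/4)/α := by gcongr
      _ = ε/4 := by field_simp
  have hsplit2 : |c| * (P*C₀/α + (1/s₀-1)/α) = |c| * ((1-s^2)^(α/2)*C₀)/α + |c| * ((1/s₀-1)/α) := by
    rw [← hPdef]
    ring
  calc |P * I₀ + P * ((∫ t in s₀..s, g t * w t) - c*K) + c * (P*K - 1/α)|
      ≤ |P * I₀| + |P * ((∫ t in s₀..s, g t * w t) - c*K)| + |c * (P*K-1/α)| := abs_add_three _ _ _
    _ ≤ P * |I₀| + P * (ε'*K) + |c| * (P*C₀/α + (1/s₀-1)/α) := by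
        rw [e1]
        linarith [e2, e3]
    _ < ε := by
        rw [hsplit2]
        have hAs' : P * |I₀| < ε/8 := hAs
        linarith [e4, e5, hrs]

set_option maxHeartbeats 1000000 in
lemma part3 (α : ℝ) (hα : 0 < α) (g : ℝ → ℝ) (hg : ContinuousOn g (Set.Icc (-1) 1)) :
    ∃ f : ℝ → ℝ, MemD α f ∧ ∀ t ∈ Set.Ioo (-1 : ℝ) 1, Talpha α f t = g t := by
  have h0mem : (0:ℝ) ∈ Set.Ioo (-1:ℝ) 1 := by norm_num
  set w : ℝ → ℝ := fun t => (1 - t^2)^(-(α/2)-1) with hw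
  have hgIoo : ContinuousOn g (Set.Ioo (-1:ℝ) 1) := hg.mono Set.Ioo_subset_Icc_self
  have hwc : ContinuousOn w (Set.Ioo (-1:ℝ) 1) := contOn_rpow _
  have hgw : ContinuousOn (fun t => g t * w t) (Set.Ioo (-1:ℝ) 1) := hgIoo.mul hwc
  set I : ℝ → ℝ := fun s => ∫ t in (0:ℝ)..s, g t * w t with hI
  have hIder : ∀ s ∈ Set.Ioo (-1:ℝ) 1, HasDerivAt I (g s * w s) s :=
    fun s hs => hasDerivAt_int hgw hs
  have hIc : ContinuousOn I (Set.Ioo (-1:ℝ) 1) :=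
    fun s hs => ((hIder s hs).continuousAt).continuousWithinAt
  set f : ℝ → ℝ := fun s => g s * (1 - s^2)^(-(α/2)) - α * s * I s with hf
  have hfc : ContinuousOn f (Set.Ioo (-1:ℝ) 1) :=
    (hgIoo.mul (contOn_rpow _)).sub ((continuousOn_const.mul continuousOn_id).mul hIc)
  set F : ℝ → ℝ := fun s => ∫ t in (0:ℝ)..s, f t * (1 - t^2)^((α-2)/2) with hF
  have hfw : ContinuousOn (fun t => f t * (1 - t^2)^((α-2)/2)) (Set.Ioo (-1:ℝ) 1) :=
    hfc.mul (contOn_rpow _)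
  have hFder : ∀ s ∈ Set.Ioo (-1:ℝ) 1, HasDerivAt F (f s * (1 - s^2)^((α-2)/2)) s :=
    fun s hs => hasDerivAt_int hfw hs
  -- F = (1-s²)^{α/2} I on Ioo
  have hFJ : ∀ s ∈ Set.Ioo (-1:ℝ) 1, F s = (1 - s^2)^(α/2) * I s := by
    have hD : ∀ s ∈ Set.Ioo (-1:ℝ) 1,
        HasDerivAt (fun s => F s - (1 - s^2)^(α/2) * I s) 0 s := by
      intro s hs
      have hb := opos hs
      have hJd := (hasDerivAt_base (p := α/2) hs).mul (hIder s hs)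
      have h1 := (hFder s hs).sub hJd
      convert h1 using 1
      case e'_4 => rfl
      case e'_5 => rfl
      case e'_8 => rfl
      have hfs : f s = g s * (1 - s^2)^(-(α/2)) - α * s * I s := rfl
      have i1 : (1 - s^2)^(-(α/2)) * (1 - s^2)^((α-2)/2)
          = (1 - s^2)^(α/2) * (1 - s^2)^(-(α/2)-1) := by
        rw [← Real.rpow_add hb, ← Real.rpow_add hb]
        ring_nf
      have i4 : (1 - s^2)^((α-2)/2) = (1 - s^2)^(α/2-1) := by
        rw [show ((α-2)/2 : ℝ) = α/2 - 1 by ring]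
      have hws : w s = (1 - s^2)^(-(α/2)-1) := rfl
      rw [hfs, hws]
      linear_combination (-(g s)) * i1 + (α * s * I s) * i4
    intro s hs
    have h2 := const_of_deriv_zero hD hs h0mem
    have h3 : F 0 - (1 - (0:ℝ)^2)^(α/2) * I 0 = 0 := by
      simp [hF, hI]
    rw [h3] at h2
    linarith [h2]
  -- Talpha f = g on Ioo
  have hTg : ∀ t ∈ Set.Ioo (-1:ℝ) 1, Talpha α f t = g t := by
    intro s hs
    have hb := opos hs
    have hPP : (1 - s^2)^(α/2) * (1 - s^2)^(-(α/2)) = 1 := by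
      rw [← Real.rpow_add hb]; simp
    have hFs := hFJ s hs
    show (1 - s^2)^(α/2) * f s + α * s * F s = g s
    rw [hFs]
    have hfs : f s = g s * (1 - s^2)^(-(α/2)) - α * s * I s := rfl
    rw [hfs]
    linear_combination g s * hPP
  -- limits: J at 1
  have hkey1 : Filter.Tendsto (fun s => (1 - s^2)^(α/2) * I s)
      (nhdsWithin 1 (Set.Iio 1)) (nhds (g 1 / α)) := key_limit α hα g hg
  -- limits: J at -1
  have hneg : Filter.Tendsto (fun s : ℝ => -s)
      (nhdsWithin (-1) (Set.Ioi (-1))) (nhdsWithin 1 (Set.Iio 1)) := by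
    rw [tendsto_nhdsWithin_iff]
    constructor
    · have h1 := (continuous_neg.tendsto (-1:ℝ)).mono_left
        (nhdsWithin_le_nhds (s := Set.Ioi (-1:ℝ)))
      simpa using h1
    · filter_upwards [self_mem_nhdsWithin] with x hx
      have hx' : -1 < x := hx
      simp only [Set.mem_Iio]
      linarith
  set gneg : ℝ → ℝ := fun t => g (-t) with hgneg
  have hgnegc : ContinuousOn gneg (Set.Icc (-1:ℝ) 1) := by
    apply hg.comp continuous_neg.continuousOn
    intro x hx
    simp only [Set.mem_Icc] at hx ⊢
    constructor <;> linarith [hx.1, hx.2]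
  have hkey2' := (key_limit α hα gneg hgnegc).comp hneg
  have hpoint : ∀ s : ℝ,
      ((fun u => (1 - u^2)^(α/2) * ∫ t in (0:ℝ)..u, gneg t * (1 - t^2)^(-(α/2)-1)) ∘
        (fun s : ℝ => -s)) s = -((1 - s^2)^(α/2) * I s) := by
    intro s
    have e3 : (∫ t in (0:ℝ)..(-s), gneg t * (1 - t^2)^(-(α/2)-1))
        = ∫ t in (0:ℝ)..(-s), (fun u => g u * w u) (-t) := by
      apply intervalIntegral.integral_congr
      intro t _
      simp only [hgneg, hw, neg_sq]
    have e4 : (∫ t in (0:ℝ)..(-s), (fun u => g u * w u) (-t)) = -(I s) := by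
      rw [intervalIntegral.integral_comp_neg (f := fun u => g u * w u)]
      rw [hI]
      rw [show -(-s) = s by ring, show -(0:ℝ) = 0 by ring]
      exact intervalIntegral.integral_symm _ _
    simp only [Function.comp_apply, neg_sq]
    rw [e3, e4]
    ring
  have hkey2 : Filter.Tendsto (fun s => (1 - s^2)^(α/2) * I s)
      (nhdsWithin (-1) (Set.Ioi (-1))) (nhds (-(g (-1) / α))) := by
    have h2 := hkey2'.neg
    have h3 : gneg 1 = g (-1) := by norm_num [hgneg]
    rw [h3] at h2
    apply h2.congr
    intro s
    rw [hpoint s]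
    ring
  -- tendsto of g itself at the endpoints
  have hrest1 : nhdsWithin (1:ℝ) (Set.Iio 1) = nhdsWithin 1 (Set.Iio 1 ∩ Set.Ioi (-1)) :=
    nhdsWithin_restrict' _ (Ioi_mem_nhds (by norm_num))
  have hrest2 : nhdsWithin (-1:ℝ) (Set.Ioi (-1)) = nhdsWithin (-1) (Set.Ioi (-1) ∩ Set.Iio 1) :=
    nhdsWithin_restrict' _ (Iio_mem_nhds (by norm_num))
  have hgt1 : Filter.Tendsto g (nhdsWithin 1 (Set.Iio 1)) (nhds (g 1)) := by
    rw [hrest1]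
    apply (hg 1 (by norm_num)).mono_left
    apply nhdsWithin_mono
    rintro x ⟨h1, h2⟩
    exact ⟨le_of_lt h2, le_of_lt h1⟩
  have hgt2 : Filter.Tendsto g (nhdsWithin (-1) (Set.Ioi (-1))) (nhds (g (-1))) := by
    rw [hrest2]
    apply (hg (-1) (by norm_num)).mono_left
    apply nhdsWithin_mono
    rintro x ⟨h1, h2⟩
    exact ⟨le_of_lt h1, le_of_lt h2⟩
  have hid1 : Filter.Tendsto (fun s : ℝ => α * s) (nhdsWithin 1 (Set.Iio 1)) (nhds (α * 1)) :=
    ((continuous_const.mul continuous_id).tendsto 1).mono_left nhdsWithin_le_nhds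
  have hid2 : Filter.Tendsto (fun s : ℝ => α * s)
      (nhdsWithin (-1) (Set.Ioi (-1))) (nhds (α * (-1))) :=
    ((continuous_const.mul continuous_id).tendsto (-1)).mono_left nhdsWithin_le_nhds
  -- eventually in Ioo
  have hev1 : ∀ᶠ s in nhdsWithin (1:ℝ) (Set.Iio 1), s ∈ Set.Ioo (-1:ℝ) 1 := by
    filter_upwards [self_mem_nhdsWithin,
      nhdsWithin_le_nhds (eventually_gt_nhds (show (-1:ℝ) < 1 by norm_num))] with x hx hx'
    exact ⟨hx', hx⟩
  have hev2 : ∀ᶠ s in nhdsWithin (-1:ℝ) (Set.Ioi (-1)), s ∈ Set.Ioo (-1:ℝ) 1 := by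
    filter_upwards [self_mem_nhdsWithin,
      nhdsWithin_le_nhds (eventually_lt_nhds (show (-1:ℝ) < 1 by norm_num))] with x hx hx'
    exact ⟨hx, hx'⟩
  -- pointwise identity f s * P s = g s - α s J s on Ioo
  have hident : ∀ s ∈ Set.Ioo (-1:ℝ) 1,
      f s * (1 - s^2)^(α/2) = g s - α * s * ((1 - s^2)^(α/2) * I s) := by
    intro s hs
    have hb := opos hs
    have hPP : (1 - s^2)^(α/2) * (1 - s^2)^(-(α/2)) = 1 := by
      rw [← Real.rpow_add hb]; simp
    have hfs : f s = g s * (1 - s^2)^(-(α/2)) - α * s * I s := rfl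
    rw [hfs]
    linear_combination g s * hPP
  -- MemD component 2
  have hmem2 : Filter.Tendsto (fun s => f s * (1 - s^2)^(α/2))
      (nhdsWithin 1 (Set.Iio 1)) (nhds 0) := by
    have h1 := hgt1.sub (hid1.mul hkey1)
    have h2 : g 1 - α * 1 * (g 1 / α) = 0 := by field_simp; ring
    rw [h2] at h1
    apply h1.congr'
    filter_upwards [hev1] with s hs
    exact (hident s hs).symm
  have hmem3 : Filter.Tendsto (fun s => f s * (1 - s^2)^(α/2))
      (nhdsWithin (-1) (Set.Ioi (-1))) (nhds 0) := by
    have h1 := hgt2.sub (hid2.mul hkey2)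
    have h2 : g (-1) - α * (-1) * (-(g (-1) / α)) = 0 := by field_simp; ring
    rw [h2] at h1
    apply h1.congr'
    filter_upwards [hev2] with s hs
    exact (hident s hs).symm
  have hmem4 : Filter.Tendsto F (nhdsWithin 1 (Set.Iio 1)) (nhds (g 1 / α)) := by
    apply hkey1.congr'
    filter_upwards [hev1] with s hs
    exact (hFJ s hs).symm
  have hmem5 : Filter.Tendsto F (nhdsWithin (-1) (Set.Ioi (-1))) (nhds (-(g (-1) / α))) := by
    apply hkey2.congr'
    filter_upwards [hev2] with s hs
    exact (hFJ s hs).symm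
  exact ⟨f, ⟨hfc, hmem2, hmem3, ⟨_, hmem4⟩, ⟨_, hmem5⟩⟩, hTg⟩

/-- For `α > 0`, the transform `T_α` is a bijection from the class `D^α` onto `C[-1,1]`:
it is injective on `D^α`, the image of any `f ∈ D^α` extends continuously to `[-1,1]`,
and every `g ∈ C[-1,1]` arises as `T_α f` for some `f ∈ D^α`. -/
theorem stmt_8 (α : ℝ) (hα : 0 < α) :
    (∀ f₁ f₂ : ℝ → ℝ, MemD α f₁ → MemD α f₂ →
      (∀ t ∈ Set.Ioo (-1 : ℝ) 1, Talpha α f₁ t = Talpha α f₂ t) →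
      ∀ t ∈ Set.Ioo (-1 : ℝ) 1, f₁ t = f₂ t) ∧
    (∀ f : ℝ → ℝ, MemD α f → ∃ g : ℝ → ℝ, ContinuousOn g (Set.Icc (-1) 1) ∧
      ∀ t ∈ Set.Ioo (-1 : ℝ) 1, Talpha α f t = g t) ∧
    (∀ g : ℝ → ℝ, ContinuousOn g (Set.Icc (-1) 1) →
      ∃ f : ℝ → ℝ, MemD α f ∧ ∀ t ∈ Set.Ioo (-1 : ℝ) 1, Talpha α f t = g t) :=
  ⟨fun f₁ f₂ hm₁ hm₂ heq => part1 α hα f₁ f₂ hm₁.1 hm₂.1 heq,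
   fun f hf => part2 α hα f hf,
   fun g hg => part3 α hα g hg⟩
end

section
/- Let ℓ : ℝⁿ → ℝ with n ≥ 3 be a function whose restriction to the hyperplane eₙ^⊥ and to every hyperplane containing eₙ is linear (i.e., agrees with a linear functional on that hyperplane). Then ℓ is a linear function on ℝⁿ. -/
open RealInnerProductSpace

/-- Auxiliary: in `ℝⁿ` with `n ≥ 3` there is a nonzero vector orthogonal to any two
given vectors. -/
lemma aux_exists_orth (n : ℕ) (hn : 3 ≤ n) (e y' : EuclideanSpace ℝ (Fin n)) :
    ∃ w : EuclideanSpace ℝ (Fin n), w ≠ 0 ∧ ⟪w, e⟫ = 0 ∧ ⟪w, y'⟫ = 0 := by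
  set K := Submodule.span ℝ ({e, y'} : Set (EuclideanSpace ℝ (Fin n))) with hKdef
  have hK : Module.finrank ℝ K ≤ 2 := by
    classical
    refine (finrank_span_le_card _).trans ?_
    calc ({e, y'} : Set _).toFinset.card ≤ ({e, y'} : Finset _).card :=
          Finset.card_le_card (by intro a; simp [Set.mem_toFinset])
      _ ≤ 2 := (Finset.card_insert_le e {y'}).trans (by simp)
  have hsum := Submodule.finrank_add_finrank_orthogonal (K := K)
  have hdim : Module.finrank ℝ (EuclideanSpace ℝ (Fin n)) = n := finrank_euclideanSpace_fin
  have hpos : Kᗮ ≠ ⊥ := by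
    intro h
    rw [h] at hsum
    simp [finrank_bot] at hsum
    omega
  obtain ⟨w, hwK, hw0⟩ := Submodule.exists_mem_ne_zero_of_ne_bot hpos
  have h1 := hwK e (Submodule.subset_span (by simp))
  have h2 := hwK y' (Submodule.subset_span (by simp))
  exact ⟨w, hw0, by rw [real_inner_comm]; exact h1, by rw [real_inner_comm]; exact h2⟩

/-- Let `n ≥ 3` and `ℓ : ℝⁿ → ℝ`. If the restriction of `ℓ` to `eₙ^⊥` and to every
hyperplane containing `eₙ` agrees with a linear functional, then `ℓ` is linear on `ℝⁿ`. -/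
theorem stmt_11 (n : ℕ) (hn : 3 ≤ n) (ℓ : EuclideanSpace ℝ (Fin n) → ℝ)
    (e : EuclideanSpace ℝ (Fin n)) (he : e = EuclideanSpace.single ⟨n - 1, by omega⟩ 1)
    (h0 : ∃ x₀ : EuclideanSpace ℝ (Fin n), ∀ y, ⟪e, y⟫ = 0 → ℓ y = ⟪x₀, y⟫)
    (hH : ∀ w : EuclideanSpace ℝ (Fin n), w ≠ 0 → ⟪w, e⟫ = 0 →
      ∃ x : EuclideanSpace ℝ (Fin n), ∀ y, ⟪w, y⟫ = 0 → ℓ y = ⟪x, y⟫) :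
    ∃ x : EuclideanSpace ℝ (Fin n), ∀ y, ℓ y = ⟪x, y⟫ := by
  obtain ⟨x₀, hx₀⟩ := h0
  have he1 : ⟪e, e⟫ = 1 := by
    rw [he, real_inner_self_eq_norm_sq, EuclideanSpace.norm_single]
    norm_num
  refine ⟨x₀ + (ℓ e - ⟪x₀, e⟫) • e, fun y => ?_⟩
  set t := ⟪e, y⟫ with ht
  set y' := y - t • e with hy'
  have hey' : ⟪e, y'⟫ = 0 := by
    rw [hy', inner_sub_right, real_inner_smul_right, he1, ← ht]
    ring
  obtain ⟨w, hw0, hwe, hwy'⟩ := aux_exists_orth n hn e y'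
  obtain ⟨x, hx⟩ := hH w hw0 hwe
  have hle : ℓ e = ⟪x, e⟫ := hx e hwe
  have hwy : ⟪w, y⟫ = 0 := by
    have : y = y' + t • e := by simp [hy']
    rw [this, inner_add_right, real_inner_smul_right, hwe, hwy']
    ring
  have hly : ℓ y = ⟪x, y⟫ := hx y hwy
  have hly' : ⟪x, y'⟫ = ⟪x₀, y'⟫ := by
    rw [← hx y' hwy', hx₀ y' hey']
  have hexp : ⟪x, y⟫ = ⟪x₀, y'⟫ + t * ℓ e := by
    have : y = y' + t • e := by simp [hy']
    rw [this, inner_add_right, real_inner_smul_right, hly', hle]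
  rw [hly, hexp, inner_add_left, real_inner_smul_left]
  have : ⟪x₀, y'⟫ = ⟪x₀, y⟫ - t * ⟪x₀, e⟫ := by
    rw [hy', inner_sub_right, real_inner_smul_right]
  rw [this]
  ring
end
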